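/- arXiv:math/0605738 — 9 statements merged into one kernel-verified Lean document; each statement's English description precedes it below -/
import Mathlib

section
/- Let C be a set of linear constraints on variables λ₁,...,λₙ containing λᵢ ≥ 0 for all i, let a be an integer, and suppose every solution of C satisfies λ_i − a·λ_j ≥ 0. Let C' = C with λ_i replaced by λ_i + a·λ_j in every constraint. Then F_C(x₁,...,xₙ) equals F_{C'}(x₁,...,xₙ) with x_j replaced by x_j·x_i^a (guideline 3: substitution rule for generating functions). -/
noncomputable section
open Classical

/-- A linear constraint `(a₀, a)`, satisfied by a nonnegative integer sequence
`d` if `a₀ + ∑ aᵢ dᵢ ≥ 0`. -/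
def SatC {n : ℕ} (c : ℤ × (Fin n → ℤ)) (d : Fin n →₀ ℕ) : Prop :=
  0 ≤ c.1 + ∑ k, c.2 k * (d k : ℤ)

/-- The full generating function of a set of linear constraints. -/
def GF {n : ℕ} (C : Set (ℤ × (Fin n → ℤ))) : MvPowerSeries (Fin n) ℤ :=
  fun d => if ∀ c ∈ C, SatC c d then 1 else 0

/-- Substituting `λ_i ← λ_i + a·λ_j` in a constraint. -/
def substConstraint {n : ℕ} (i j : Fin n) (a : ℤ) (c : ℤ × (Fin n → ℤ)) :
    ℤ × (Fin n → ℤ) :=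
  (c.1, Function.update c.2 j (c.2 j + a * c.2 i))

/-- Guideline 3: if `[λ_i − a·λ_j ≥ 0]` is implied by `C`, and `C'` is obtained
from `C` by the substitution `λ_i ← λ_i + a·λ_j`, then
`F_C(X) = F_{C'}(X ; x_j ← x_j x_i^a)`.  The substitution `x_j ← x_j x_i^a`
sends the monomial with exponents `e` to the monomial with exponents
`e + a·e_j` at position `i`; so the coefficient of `x^d` on the right-hand
side is the coefficient of `F_{C'}` at `d` with `d_i` replaced by
`d_i − a·d_j` when this is nonnegative, and `0` otherwise. -/
theorem guideline_three {n : ℕ} (C : Set (ℤ × (Fin n → ℤ)))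
    (i j : Fin n) (hij : i ≠ j) (a : ℤ)
    (hbasic : ∀ k : Fin n, (0, fun l => if l = k then (1:ℤ) else 0) ∈ C)
    (himp : ∀ d : Fin n →₀ ℕ, (∀ c ∈ C, SatC c d) →
      0 ≤ (d i : ℤ) - a * (d j : ℤ)) :
    ∀ d : Fin n →₀ ℕ,
      GF C d =
        if 0 ≤ (d i : ℤ) - a * (d j : ℤ) then
          GF (substConstraint i j a '' C)
            (Finsupp.update d i ((d i : ℤ) - a * (d j : ℤ)).toNat)
        else 0 := by
  intro d
  by_cases h : 0 ≤ (d i : ℤ) - a * (d j : ℤ)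
  · rw [if_pos h]
    set d' := Finsupp.update d i ((d i : ℤ) - a * (d j : ℤ)).toNat with hd'
    have hdi' : ((d' i : ℤ)) = (d i : ℤ) - a * (d j : ℤ) := by
      simp [hd', Int.toNat_of_nonneg h]
    have hdk : ∀ k, k ≠ i → d' k = d k := by
      intro k hk
      simp [hd', Finsupp.coe_update, Function.update_of_ne hk]
    have key : ∀ c : ℤ × (Fin n → ℤ),
        SatC (substConstraint i j a c) d' ↔ SatC c d := by
      intro c
      unfold SatC substConstraint
      have hsum : ∑ k, (Function.update c.2 j (c.2 j + a * c.2 i)) k * (d' k : ℤ)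
          = ∑ k, c.2 k * (d k : ℤ) := by
        have hterm : ∀ k : Fin n,
            (Function.update c.2 j (c.2 j + a * c.2 i)) k * (d' k : ℤ)
            = c.2 k * (d k : ℤ) +
              ((if k = i then -(c.2 i * (a * (d j : ℤ))) else 0) +
               (if k = j then c.2 i * (a * (d j : ℤ)) else 0)) := by
          intro k
          rcases eq_or_ne k i with rfl | hki
          · rw [Function.update_of_ne hij, hdi']
            simp [hij]
            ring
          · rcases eq_or_ne k j with rfl | hkj
            · rw [Function.update_self, hdk _ hki]
              simp [hki]
              ring
            · rw [Function.update_of_ne hkj, hdk _ hki]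
              simp [hki, hkj]
        rw [Finset.sum_congr rfl (fun k _ => hterm k)]
        simp [Finset.sum_add_distrib, Finset.sum_ite_eq']
      rw [hsum]
    have hiff : (∀ c ∈ substConstraint i j a '' C, SatC c d') ↔ (∀ c ∈ C, SatC c d) := by
      constructor
      · intro H c hc
        rw [← key c]
        exact H _ ⟨c, hc, rfl⟩
      · rintro H _ ⟨c, hc, rfl⟩
        exact (key c).mpr (H c hc)
    show (if ∀ c ∈ C, SatC c d then (1:ℤ) else 0)
        = if ∀ c ∈ substConstraint i j a '' C, SatC c d' then 1 else 0
    rw [if_congr hiff.symm rfl rfl]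
  · rw [if_neg h]
    show (if ∀ c ∈ C, SatC c d then (1:ℤ) else 0) = 0
    rw [if_neg]
    intro hall
    exact h (himp d hall)
end
end

section
/- Let Cₙ(x₁,...,xₙ) be the full generating function for compositions (λ₁,...,λₙ) of positive integers with λᵢ ≥ λ_{i+1}/2 for 1 ≤ i < n (Minc-type compositions with n parts). Then C₁(x₁) = x₁/(1 − x₁) and for n ≥ 2: Cₙ(x₁,...,xₙ) = (xₙ/(1 − xₙ))·(C_{n−1}(x₁,...,x_{n−1}) − C_{n−1}(x₁,...,x_{n−2}, x_{n−1}xₙ²)). -/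
/-
Coefficientwise, multiplying by `1 - xₙ` takes the difference in the last exponent `a`.
When the first `n - 1` exponents form a Minc composition with last part `p`, the
coefficient of `(1 - xₙ) Cₙ` is `[1 ≤ a ≤ 2p] - [2 ≤ a ≤ 2p + 1] = [a = 1] - [a = 2p + 1]`,
which is the coefficient of `xₙ (C_{n-1} - C_{n-1}(…, x_{n-1}xₙ²))`; otherwise both
sides vanish.
-/

noncomputable section
open Classical

/-- `(λ₁,…,λ_k)` is a Minc-type composition: all parts positive and each part
is at most twice the preceding part. -/
def Minc (k : ℕ) (f : Fin k → ℕ) : Prop :=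
  (∀ i, 0 < f i) ∧ ∀ i : Fin k, ∀ h : (i : ℕ) + 1 < k, f ⟨(i : ℕ) + 1, h⟩ ≤ 2 * f i

/-- The full generating function `C_k(x₁,…,x_k)` of Minc-type compositions
with `k` parts. -/
def MincGF (k : ℕ) : MvPowerSeries (Fin k) ℤ :=
  fun d => if Minc k (fun i => d i) then 1 else 0

/-- `C_{m+1}(x₁,…,x_{m+1})` viewed in the `(m+2)`-variable power series ring. -/
def MincEmb (m : ℕ) : MvPowerSeries (Fin (m + 2)) ℤ :=
  fun d => if Minc (m + 1) (fun i => d i.castSucc) ∧ d (Fin.last (m + 1)) = 0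
    then 1 else 0

/-- `C_{m+1}(x₁,…,x_m,x_{m+1}x_{m+2}²)`: the result of the substitution
`x_{n−1} ← x_{n−1}xₙ²` (with `n = m+2`) applied to `C_{n−1}`; its coefficient
at `d` is nonzero exactly when the last exponent equals twice the
next-to-last exponent and the first `n−1` exponents form a Minc composition. -/
def MincSub (m : ℕ) : MvPowerSeries (Fin (m + 2)) ℤ :=
  fun d => if Minc (m + 1) (fun i => d i.castSucc) ∧
      d (Fin.last (m + 1)) = 2 * d ((Fin.last m).castSucc)
    then 1 else 0

open MvPowerSeries

theorem minc_iff_forall_lt (k : ℕ) (f : Fin k → ℕ) :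
    Minc k f ↔ (∀ j (h : j < k), 0 < f ⟨j, h⟩) ∧
      ∀ j (h : j < k) (h' : j + 1 < k), f ⟨j + 1, h'⟩ ≤ 2 * f ⟨j, h⟩ :=
  ⟨fun ⟨hpos, hle⟩ => ⟨fun j h => hpos ⟨j, h⟩, fun j h => hle ⟨j, h⟩⟩,
    fun ⟨hpos, hle⟩ => ⟨fun i => hpos i i.isLt, fun i => hle i i.isLt⟩⟩

theorem minc_one_iff (f : Fin 1 → ℕ) : Minc 1 f ↔ 0 < f 0 := by
  rw [minc_iff_forall_lt]
  refine ⟨fun ⟨hpos, _⟩ => hpos 0 one_pos,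
    fun h => ⟨fun j hj => ?_, fun j _ _ => by omega⟩⟩
  obtain rfl : j = 0 := by omega
  exact h

theorem minc_succ_succ_iff (m : ℕ) (f : Fin (m + 2) → ℕ) :
    Minc (m + 2) f ↔ Minc (m + 1) (fun i => f i.castSucc) ∧
      0 < f (Fin.last (m + 1)) ∧ f (Fin.last (m + 1)) ≤ 2 * f (Fin.last m).castSucc := by
  simp only [minc_iff_forall_lt]
  constructor
  · rintro ⟨hpos, hle⟩
    exact ⟨⟨fun j _ => hpos j (by omega), fun j _ _ => hle j (by omega) (by omega)⟩,
      hpos (m + 1) (by omega), hle m (by omega) (by omega)⟩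
  · rintro ⟨⟨hpos, hle⟩, hlast_pos, hlast_le⟩
    refine ⟨fun j h => ?_, fun j h h' => ?_⟩
    · rcases Nat.lt_or_ge j (m + 1) with hj | hj
      · exact hpos j hj
      · obtain rfl : j = m + 1 := by omega
        exact hlast_pos
    · rcases Nat.lt_or_ge (j + 1) (m + 1) with hj | hj
      · exact hle j (by omega) hj
      · obtain rfl : j = m := by omega
        exact hlast_le

theorem MvPowerSeries.coeff_X_mul_eq_ite {σ R : Type*} [CommSemiring R] (s : σ)
    (F : MvPowerSeries σ R) (d : σ →₀ ℕ) :
    coeff d (X s * F) = if 1 ≤ d s then coeff (d - Finsupp.single s 1) F else 0 := by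
  rw [X, coeff_monomial_mul]
  simp [Finsupp.single_le_iff]

theorem one_sub_X_mul_mincGF_one : (1 - X (0 : Fin 1)) * MincGF 1 = X 0 := by
  ext d
  have hd : d = Finsupp.single 0 1 ↔ d 0 = 1 := by
    rw [Finsupp.ext_iff, Fin.forall_fin_one, Finsupp.single_eq_same]
  rw [sub_mul, one_mul, map_sub, coeff_X_mul_eq_ite, coeff_X]
  simp only [coeff_apply, MincGF, minc_one_iff, Finsupp.tsub_apply, Finsupp.single_eq_same, hd]
  split_ifs <;> omega

theorem one_sub_X_mul_mincGF_succ_succ (m : ℕ) :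
    (1 - X (Fin.last (m + 1))) * MincGF (m + 2) =
      X (Fin.last (m + 1)) * (MincEmb m - MincSub m) := by
  ext d
  rw [sub_mul, one_mul, map_sub, coeff_X_mul_eq_ite, coeff_X_mul_eq_ite]
  by_cases hlast : 1 ≤ d (Fin.last (m + 1))
  · have hinit (i : Fin (m + 1)) : Finsupp.single (Fin.last (m + 1)) 1 i.castSucc = 0 :=
      Finsupp.single_eq_of_ne (Fin.castSucc_lt_last i).ne
    simp only [if_pos hlast, map_sub, coeff_apply, MincGF, MincEmb, MincSub, minc_succ_succ_iff,
      Finsupp.tsub_apply, hinit, Finsupp.single_eq_same, Nat.sub_zero]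
    by_cases hinit_minc : Minc (m + 1) (fun i => d i.castSucc)
    · simp only [hinit_minc, true_and]
      split_ifs <;> omega
    · simp [hinit_minc]
  · have hnot : ¬ Minc (m + 2) (fun i => d i) := fun h => hlast (h.1 (Fin.last (m + 1)))
    simp [if_neg hlast, coeff_apply, MincGF, hnot]

/-- The recurrence
`Cₙ(x₁,…,xₙ) = (xₙ/(1−xₙ))·(C_{n−1}(x₁,…,x_{n−1}) − C_{n−1}(x₁,…,x_{n−2},x_{n−1}xₙ²))`
for `n = m+2 ≥ 2`, together with the initial condition `C₁(x₁) = x₁/(1−x₁)`,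
with the denominator `1 − xₙ` cleared. -/
theorem minc_recurrence :
    ((1 - MvPowerSeries.X (0 : Fin 1)) * MincGF 1 = MvPowerSeries.X 0) ∧
    ∀ m : ℕ,
      (1 - MvPowerSeries.X (Fin.last (m + 1))) * MincGF (m + 2) =
        MvPowerSeries.X (Fin.last (m + 1)) * (MincEmb m - MincSub m) :=
  ⟨one_sub_X_mul_mincGF_one, one_sub_X_mul_mincGF_succ_succ⟩
end
end

section
/- The generating function ν(q) = Σ_{d,N} ν(d,N)q^N for Minc's partition function, where ν(d,N) counts compositions of N with first part d in which each part is at most twice the preceding part, satisfies ν(q) = 1/(1 + Σ_{i≥1} (−1)^i q^{2^{i+1} − i − 2} / ((1−q)(1−q³)(1−q⁷)···(1−q^{2^i − 1}))). -/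
/-!
Read backwards, a composition counted by `ν` is a list `a :: t` of positive integers in which
each part is at most twice the next. Let `G_k` be the generating function of the nonempty such
lists by the weight `(2^(k+1) - 1) a + Σ t`, the size after appending the parts
`2a, 4a, …, 2^k a`, and let `c = 2^(k+1) - 1`. Removing a last part `1`, lowering a last part
`≥ 2` by one, and removing a last part equal to twice the previous one are bijections proving
`(1 - q^c) G_k = q^c (ν - G_{k+1})`, where `ν = 1 + G_0`. Hence
`ν · Σ_{i ≤ k} (-1)^i T_i = 1 + (-1)^k T_k G_k` for the terms `T_i` of the denominator, and
`T_k G_k = O(q^(k+1))`.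
-/

noncomputable section
open PowerSeries

/-- The number of compositions of `N` (sequences of positive integers summing
to `N`, including the empty composition of `0`) in which each part is at most
twice the preceding part; `ν(q) = Σ_N nuCoeff N · q^N` is Minc's generating
function `Σ_{d,N} ν(d,N) q^N`. -/
def nuCoeff (N : ℕ) : ℕ :=
  Nat.card {l : List ℕ // l.sum = N ∧ (∀ x ∈ l, 0 < x) ∧
    l.Chain' (fun a b => b ≤ 2 * a)}

/-- The series `1 + Σ_{i≥1} (−1)^i q^{2^{i+1}−i−2} / ((1−q)(1−q³)(1−q⁷)⋯(1−q^{2^i−1}))`.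
Since the `i`-th term has order `2^{i+1}−i−2 ≥ i`, its coefficient of `q^N`
only receives contributions from terms with `i ≤ N`, so the infinite sum can
be defined coefficientwise by a finite sum.  The factor `1/(1−q^{2^j−1})`
is the inverse `invOfUnit (1 − q^{2^j−1}) 1` in `ℤ[[q]]`. -/
def nuDenom : PowerSeries ℤ :=
  PowerSeries.mk fun N =>
    ∑ i ∈ Finset.range (N + 1),
      (PowerSeries.coeff (R := ℤ) N)
        ((-1 : ℤ) ^ i • ((X : PowerSeries ℤ) ^ (2 ^ (i + 1) - i - 2) *
          ∏ j ∈ Finset.Icc 1 i,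
            PowerSeries.invOfUnit (1 - (X : PowerSeries ℤ) ^ (2 ^ j - 1)) 1))

lemma PowerSeries.one_sub_X_pow_mul_invOfUnit {R : Type*} [Ring R] {n : ℕ} (hn : n ≠ 0) :
    (1 - X ^ n : R⟦X⟧) * invOfUnit (1 - X ^ n) 1 = 1 :=
  mul_invOfUnit _ _ (by simp [zero_pow hn])

namespace Minc

open Finset

/-- Minc compositions, listed from the last part to the first. -/
def Admissible (l : List ℕ) : Prop :=
  (∀ x ∈ l, 0 < x) ∧ l.IsChain fun a b => a ≤ 2 * b

instance : DecidablePred Admissible := fun _ => inferInstanceAs (Decidable (_ ∧ _))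

@[simp] lemma admissible_nil : Admissible [] := ⟨by simp, .nil⟩

@[simp] lemma admissible_cons {a : ℕ} {t : List ℕ} :
    Admissible (a :: t) ↔ 0 < a ∧ (∀ b ∈ t.head?, a ≤ 2 * b) ∧ Admissible t := by
  simp only [Admissible, List.forall_mem_cons, List.isChain_cons]
  tauto

lemma admissible_reverse_iff {l : List ℕ} :
    Admissible l.reverse ↔ (∀ x ∈ l, 0 < x) ∧ l.IsChain fun a b => b ≤ 2 * a := by
  simp [Admissible, List.isChain_reverse]

def positiveLists (n : ℕ) : Finset (List ℕ) :=
  univ.image fun c : Composition n => c.blocks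

lemma mem_positiveLists {n : ℕ} {l : List ℕ} :
    l ∈ positiveLists n ↔ (∀ x ∈ l, 0 < x) ∧ l.sum = n := by
  simp only [positiveLists, mem_image, mem_univ, true_and]
  constructor
  · rintro ⟨c, rfl⟩
    exact ⟨fun _ => c.blocks_pos, c.blocks_sum⟩
  · rintro ⟨hpos, rfl⟩
    exact ⟨⟨l, hpos _, rfl⟩, rfl⟩

def admissibleLists (N : ℕ) : Finset (List ℕ) :=
  (positiveLists N).filter Admissible

lemma mem_admissibleLists {N : ℕ} {l : List ℕ} :
    l ∈ admissibleLists N ↔ Admissible l ∧ l.sum = N := by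
  simp only [admissibleLists, mem_filter, mem_positiveLists, Admissible]
  tauto

lemma nuCoeff_eq_card_admissibleLists (N : ℕ) : nuCoeff N = #(admissibleLists N) := by
  rw [nuCoeff, ← Nat.card_eq_finsetCard]
  refine Nat.card_congr (.subtypeEquiv (List.reverse_involutive.toPerm _) fun l => ?_)
  change _ ↔ l.reverse ∈ _
  simp only [mem_admissibleLists, admissible_reverse_iff, List.sum_reverse]
  exact ⟨fun ⟨hs, hp, hc⟩ => ⟨⟨hp, hc⟩, hs⟩, fun ⟨⟨hp, hc⟩, hs⟩ => ⟨hs, hp, hc⟩⟩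

/-- Since `(2 ^ (k + 1) - 1) * a = a + 2 * a + ⋯ + 2 ^ k * a`, this is the sum of `a :: t`
with the parts `2 * a, …, 2 ^ k * a` put in front. -/
def weight (k : ℕ) : List ℕ → ℕ
  | [] => 0
  | a :: t => (2 ^ (k + 1) - 1) * a + t.sum

@[simp] lemma weight_nil (k : ℕ) : weight k [] = 0 := rfl

lemma weight_cons (k a : ℕ) (t : List ℕ) :
    weight k (a :: t) = (2 ^ (k + 1) - 1) * a + t.sum := rfl

lemma weight_one_cons (k : ℕ) (t : List ℕ) :
    weight k (1 :: t) = t.sum + (2 ^ (k + 1) - 1) := by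
  rw [weight_cons, mul_one, add_comm]

lemma weight_succ_cons (k a : ℕ) (t : List ℕ) :
    weight k ((a + 1) :: t) = weight k (a :: t) + (2 ^ (k + 1) - 1) := by
  simp only [weight_cons]
  ring

lemma weight_zero_eq_sum (l : List ℕ) : weight 0 l = l.sum := by
  cases l <;> simp [weight_cons]

lemma sum_le_weight (k : ℕ) (l : List ℕ) : l.sum ≤ weight k l := by
  cases l with
  | nil => simp
  | cons a t =>
    have : 1 ≤ 2 ^ (k + 1) - 1 := Nat.le_sub_one_of_lt (Nat.one_lt_two_pow (by omega))
    rw [List.sum_cons, weight_cons]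
    exact add_le_add_left (Nat.le_mul_of_pos_left a this) _

lemma weight_succ_eq_weight_two_mul_cons (k b : ℕ) (t : List ℕ) :
    weight (k + 1) (b :: t) = weight k (2 * b :: b :: t) := by
  have : 2 ^ (k + 1 + 1) - 1 = 2 * (2 ^ (k + 1) - 1) + 1 := by
    have := Nat.one_le_two_pow (n := k + 1); rw [pow_succ]; omega
  simp only [weight_cons, List.sum_cons, this]
  ring

def weightedLists (k M : ℕ) : Finset (List ℕ) :=
  ((range (M + 1)).biUnion admissibleLists).filter fun l => l ≠ [] ∧ weight k l = M

lemma mem_weightedLists {k M : ℕ} {l : List ℕ} :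
    l ∈ weightedLists k M ↔ l ≠ [] ∧ Admissible l ∧ weight k l = M := by
  simp only [weightedLists, mem_filter, mem_biUnion, mem_range, mem_admissibleLists]
  constructor
  · rintro ⟨⟨_, _, hl, -⟩, hne, hw⟩
    exact ⟨hne, hl, hw⟩
  · rintro ⟨hne, hl, rfl⟩
    exact ⟨⟨l.sum, Nat.lt_succ_of_le (sum_le_weight k l), hl, rfl⟩, hne, rfl⟩

@[simp] lemma nil_notMem_weightedLists (k M : ℕ) : [] ∉ weightedLists k M :=
  fun h => (mem_weightedLists.1 h).1 rfl

@[simp] lemma cons_mem_weightedLists {k M a : ℕ} {t : List ℕ} :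
    a :: t ∈ weightedLists k M ↔ Admissible (a :: t) ∧ weight k (a :: t) = M := by
  simp only [mem_weightedLists, ne_eq, List.cons_ne_nil, not_false_eq_true, true_and]

lemma weightedLists_eq_empty {k M : ℕ} (hM : M < 2 ^ (k + 1) - 1) : weightedLists k M = ∅ := by
  refine eq_empty_of_forall_notMem fun l hl => ?_
  obtain ⟨hne, hadm, rfl⟩ := mem_weightedLists.1 hl
  obtain ⟨a, t, rfl⟩ := List.exists_cons_of_ne_nil hne
  have ha : 0 < a := (admissible_cons.1 hadm).1
  have : 2 ^ (k + 1) - 1 ≤ weight k (a :: t) := le_add_right (Nat.le_mul_of_pos_right _ ha)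
  omega

lemma card_filter_headI_eq_one (k M : ℕ) :
    #{l ∈ weightedLists k (M + (2 ^ (k + 1) - 1)) | l.headI = 1} = #(admissibleLists M) := by
  refine card_nbij' List.tail (List.cons 1) ?_ ?_ ?_ fun _ _ => rfl
  · rintro (_ | ⟨a, t⟩) hl <;>
      simp only [mem_coe, mem_filter, nil_notMem_weightedLists, false_and, cons_mem_weightedLists,
        List.headI_cons] at hl
    obtain ⟨⟨hadm, hw⟩, rfl⟩ := hl
    rw [weight_one_cons, add_left_inj] at hw
    exact mem_admissibleLists.2 ⟨(admissible_cons.1 hadm).2.2, hw⟩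
  · intro t ht
    obtain ⟨hadm, rfl⟩ := mem_admissibleLists.1 ht
    simp only [mem_coe, mem_filter, cons_mem_weightedLists, admissible_cons, weight_one_cons]
    refine ⟨⟨⟨one_pos, fun b hb => ?_, hadm⟩, trivial⟩, rfl⟩
    have := hadm.1 b (List.mem_of_mem_head? hb)
    omega
  · rintro (_ | ⟨a, t⟩) hl <;>
      simp only [mem_coe, mem_filter, nil_notMem_weightedLists, false_and, List.headI_cons] at hl
    rw [List.tail_cons, hl.2]

def HeadIncrementable : List ℕ → Prop
  | [] => True
  | a :: t => ∀ b ∈ t.head?, a < 2 * b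

@[simp] lemma headIncrementable_cons {a : ℕ} {t : List ℕ} :
    HeadIncrementable (a :: t) ↔ ∀ b ∈ t.head?, a < 2 * b := .rfl

instance : DecidablePred HeadIncrementable := Classical.decPred _

lemma card_filter_headI_ne_one (k M : ℕ) :
    #{l ∈ weightedLists k (M + (2 ^ (k + 1) - 1)) | l.headI ≠ 1} =
      #{l ∈ weightedLists k M | HeadIncrementable l} := by
  refine card_nbij' (fun l => (l.headI - 1) :: l.tail) (fun l => (l.headI + 1) :: l.tail)
    ?_ ?_ ?_ ?_
  · rintro (_ | ⟨_ | a, t⟩) hl <;>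
      simp only [mem_coe, mem_filter, nil_notMem_weightedLists, false_and, cons_mem_weightedLists,
        admissible_cons, lt_irrefl, List.headI_cons, List.tail_cons, add_tsub_cancel_right,
        headIncrementable_cons, weight_succ_cons, add_left_inj] at hl ⊢
    obtain ⟨⟨⟨-, hab, ht⟩, hw⟩, ha⟩ := hl
    exact ⟨⟨⟨by omega, fun b hb => (hab b hb).trans' a.le_succ, ht⟩, hw⟩, hab⟩
  · rintro (_ | ⟨a, t⟩) hl <;>
      simp only [mem_coe, mem_filter, nil_notMem_weightedLists, false_and, cons_mem_weightedLists,
        admissible_cons, List.headI_cons, List.tail_cons, headIncrementable_cons,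
        weight_succ_cons, add_left_inj] at hl ⊢
    obtain ⟨⟨⟨ha, -, ht⟩, hw⟩, hab⟩ := hl
    exact ⟨⟨⟨a.succ_pos, hab, ht⟩, hw⟩, by omega⟩
  · rintro (_ | ⟨_ | a, t⟩) hl <;>
      simp only [mem_coe, mem_filter, nil_notMem_weightedLists, false_and, cons_mem_weightedLists,
        admissible_cons, lt_irrefl] at hl
    rfl
  · rintro (_ | ⟨a, t⟩) hl <;>
      simp only [mem_coe, mem_filter, nil_notMem_weightedLists, false_and] at hl
    rfl

lemma card_filter_not_headIncrementable (k M : ℕ) :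
    #{l ∈ weightedLists k M | ¬ HeadIncrementable l} = #(weightedLists (k + 1) M) := by
  refine card_nbij' List.tail (fun l => 2 * l.headI :: l) ?_ ?_ ?_ fun _ _ => rfl
  · rintro (_ | ⟨a, _ | ⟨b, t⟩⟩) hl <;>
      simp only [mem_coe, mem_filter, nil_notMem_weightedLists, false_and, cons_mem_weightedLists,
        admissible_cons, headIncrementable_cons, List.head?_nil, List.head?_cons, Option.mem_def,
        Option.some.injEq, forall_eq', reduceCtorEq, IsEmpty.forall_iff, implies_true,
        not_true_eq_false, and_false, not_lt, List.tail_cons] at hl ⊢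
    obtain ⟨⟨⟨-, hab, hb, ht⟩, hw⟩, hba⟩ := hl
    obtain rfl : a = 2 * b := le_antisymm hab hba
    exact ⟨⟨hb, ht⟩, (weight_succ_eq_weight_two_mul_cons k b t).trans hw⟩
  · rintro (_ | ⟨b, t⟩) hl <;>
      simp only [mem_coe, nil_notMem_weightedLists, cons_mem_weightedLists, admissible_cons] at hl
    simp only [mem_coe, mem_filter, cons_mem_weightedLists, admissible_cons, List.headI_cons,
      headIncrementable_cons, List.head?_cons, Option.mem_def, Option.some.injEq, forall_eq',
      lt_irrefl, not_false_eq_true, and_true, ← weight_succ_eq_weight_two_mul_cons]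
    exact ⟨⟨by omega, le_rfl, hl.1⟩, hl.2⟩
  · rintro (_ | ⟨a, _ | ⟨b, t⟩⟩) hl <;>
      simp only [mem_coe, mem_filter, nil_notMem_weightedLists, false_and, cons_mem_weightedLists,
        admissible_cons, headIncrementable_cons, List.head?_nil, List.head?_cons, Option.mem_def,
        Option.some.injEq, forall_eq', reduceCtorEq, IsEmpty.forall_iff, implies_true,
        not_true_eq_false, and_false, not_lt] at hl
    exact congrArg (· :: b :: t) (le_antisymm hl.2 hl.1.1.2.1)

lemma card_weightedLists_add (k M : ℕ) :
    #(weightedLists k (M + (2 ^ (k + 1) - 1))) + #(weightedLists (k + 1) M) =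
      #(admissibleLists M) + #(weightedLists k M) := by
  rw [← card_filter_add_card_filter_not (fun l => l.headI = 1),
    ← card_filter_add_card_filter_not (s := weightedLists k M) HeadIncrementable,
    card_filter_headI_eq_one, card_filter_headI_ne_one, card_filter_not_headIncrementable]
  ring

lemma weightedLists_zero_eq_erase (N : ℕ) : weightedLists 0 N = (admissibleLists N).erase [] := by
  ext l
  simp only [mem_weightedLists, mem_erase, mem_admissibleLists, weight_zero_eq_sum]

lemma card_admissibleLists (N : ℕ) :
    #(admissibleLists N) = #(weightedLists 0 N) + if N = 0 then 1 else 0 := by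
  rw [weightedLists_zero_eq_erase]
  split_ifs with hN
  · exact (card_erase_add_one (mem_admissibleLists.2 ⟨admissible_nil, hN.symm⟩)).symm
  · rw [erase_eq_of_notMem fun h => hN (mem_admissibleLists.1 h).2.symm, add_zero]

def admissibleSeries : ℤ⟦X⟧ := mk fun N => (#(admissibleLists N) : ℤ)

lemma mk_nuCoeff_eq_admissibleSeries : mk (fun N => (nuCoeff N : ℤ)) = admissibleSeries := by
  ext N
  rw [coeff_mk, nuCoeff_eq_card_admissibleLists, admissibleSeries, coeff_mk]

def weightedSeries (k : ℕ) : ℤ⟦X⟧ := mk fun M => (#(weightedLists k M) : ℤ)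

lemma admissibleSeries_eq_one_add : admissibleSeries = 1 + weightedSeries 0 := by
  ext N
  simp only [admissibleSeries, weightedSeries, coeff_mk, map_add, coeff_one, card_admissibleLists]
  push_cast
  ring

lemma X_dvd_weightedSeries (k : ℕ) : X ∣ weightedSeries k := by
  rw [X_dvd_iff, weightedSeries, ← coeff_zero_eq_constantCoeff_apply, coeff_mk,
    weightedLists_eq_empty (Nat.sub_pos_of_lt (Nat.one_lt_two_pow (by omega))), card_empty,
    Nat.cast_zero]

lemma weightedSeries_add_X_pow_mul (k : ℕ) :
    weightedSeries k + X ^ (2 ^ (k + 1) - 1) * weightedSeries (k + 1) =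
      X ^ (2 ^ (k + 1) - 1) * (admissibleSeries + weightedSeries k) := by
  ext M
  simp only [map_add, coeff_X_pow_mul', weightedSeries, admissibleSeries, coeff_mk]
  split_ifs with hM
  · obtain ⟨M, rfl⟩ := Nat.exists_eq_add_of_le' hM
    rw [Nat.add_sub_cancel]
    exact_mod_cast card_weightedLists_add k M
  · rw [weightedLists_eq_empty (not_le.1 hM)]
    simp

lemma weightedSeries_eq_mul_sub (k : ℕ) :
    weightedSeries k = X ^ (2 ^ (k + 1) - 1) * invOfUnit (1 - X ^ (2 ^ (k + 1) - 1)) 1 *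
      (admissibleSeries - weightedSeries (k + 1)) := by
  have hinv := one_sub_X_pow_mul_invOfUnit (R := ℤ)
    (Nat.sub_ne_zero_of_lt (Nat.one_lt_two_pow (n := k + 1) (by omega)))
  linear_combination invOfUnit (1 - X ^ (2 ^ (k + 1) - 1)) 1 * weightedSeries_add_X_pow_mul k -
    weightedSeries k * hinv

def nuDenomTerm (i : ℕ) : ℤ⟦X⟧ :=
  X ^ (2 ^ (i + 1) - i - 2) * ∏ j ∈ Icc 1 i, invOfUnit (1 - X ^ (2 ^ j - 1)) 1

lemma nuDenomTerm_zero : nuDenomTerm 0 = 1 := by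
  simp [nuDenomTerm]

lemma nuDenomTerm_succ (i : ℕ) :
    nuDenomTerm (i + 1) =
      nuDenomTerm i * (X ^ (2 ^ (i + 1) - 1) * invOfUnit (1 - X ^ (2 ^ (i + 1) - 1)) 1) := by
  have hlt : i + 1 < 2 ^ (i + 1) := Nat.lt_two_pow_self
  have hexp : 2 ^ (i + 1 + 1) - (i + 1) - 2 = (2 ^ (i + 1) - i - 2) + (2 ^ (i + 1) - 1) := by
    rw [pow_succ]; omega
  rw [nuDenomTerm, nuDenomTerm, hexp, pow_add, prod_Icc_succ_top (by omega)]
  ring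

lemma X_pow_dvd_nuDenomTerm (i : ℕ) : X ^ i ∣ nuDenomTerm i := by
  have : i ≤ 2 ^ (i + 1) - i - 2 := by
    have := Nat.lt_two_pow_self (n := i); rw [pow_succ]; omega
  exact (pow_dvd_pow X this).mul_right _

lemma nuDenomTerm_mul_weightedSeries (k : ℕ) :
    nuDenomTerm k * weightedSeries k =
      nuDenomTerm (k + 1) * (admissibleSeries - weightedSeries (k + 1)) := by
  rw [nuDenomTerm_succ, weightedSeries_eq_mul_sub]
  ring

lemma admissibleSeries_mul_sum_range (k : ℕ) :
    admissibleSeries * ∑ i ∈ range (k + 1), (-1) ^ i * nuDenomTerm i =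
      1 + (-1) ^ k * (nuDenomTerm k * weightedSeries k) := by
  induction k with
  | zero => simp [nuDenomTerm_zero, admissibleSeries_eq_one_add]
  | succ k ih =>
    rw [sum_range_succ, mul_add, ih, nuDenomTerm_mul_weightedSeries]
    ring

lemma X_pow_dvd_nuDenom_sub (N : ℕ) :
    X ^ (N + 1) ∣ nuDenom - ∑ i ∈ range (N + 1), (-1) ^ i * nuDenomTerm i := by
  refine X_pow_dvd_iff.2 fun m hm => ?_
  have hcoeff : coeff m nuDenom = ∑ i ∈ range (m + 1), coeff m ((-1) ^ i * nuDenomTerm i) := by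
    simp only [nuDenom, coeff_mk, zsmul_eq_mul, Int.cast_pow, Int.cast_neg, Int.cast_one]
    rfl
  rw [map_sub, hcoeff, map_sum, sub_eq_zero]
  refine sum_subset (range_subset_range.2 (by omega)) fun i _ him => ?_
  exact X_pow_dvd_iff.1 ((X_pow_dvd_nuDenomTerm i).mul_left _) m (by simpa using him)

lemma X_pow_succ_dvd_nuDenomTerm_mul_weightedSeries (k : ℕ) :
    X ^ (k + 1) ∣ nuDenomTerm k * weightedSeries k :=
  pow_succ (X : ℤ⟦X⟧) k ▸ mul_dvd_mul (X_pow_dvd_nuDenomTerm k) (X_dvd_weightedSeries k)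

end Minc

/-- Minc's generating function satisfies
`ν(q) = 1/(1 + Σ_{i≥1} (−1)^i q^{2^{i+1}−i−2}/((1−q)(1−q³)⋯(1−q^{2^i−1})))`. -/
theorem minc_generating_function :
    PowerSeries.mk (fun N => (nuCoeff N : ℤ)) * nuDenom = 1 := by
  rw [Minc.mk_nuCoeff_eq_admissibleSeries]
  ext N
  have hdvd : X ^ (N + 1) ∣ Minc.admissibleSeries * nuDenom - 1 := by
    convert dvd_add ((Minc.X_pow_dvd_nuDenom_sub N).mul_left Minc.admissibleSeries)
      ((Minc.X_pow_succ_dvd_nuDenomTerm_mul_weightedSeries N).mul_left ((-1) ^ N)) using 1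
    linear_combination Minc.admissibleSeries_mul_sum_range N
  simpa [sub_eq_zero] using X_pow_dvd_iff.1 hdvd N N.lt_succ_self
end
end

section
/- The generating function for two-rowed plane partitions with rows of length n, i.e. sequences (a₁,b₁,...,aₙ,bₙ) of nonnegative integers with aᵢ ≥ bᵢ, aᵢ ≥ a_{i+1}, bᵢ ≥ b_{i+1}, counted by q^{Σaᵢ + Σbᵢ}, equals 1/((q;q)ₙ (q²;q)ₙ). -/
noncomputable section
open PowerSeries

/-- The number of two-rowed plane partitions `(a₁,…,aₙ; b₁,…,bₙ)` of `N`: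
nonnegative integers with `aᵢ ≥ bᵢ`, `aᵢ ≥ a_{i+1}`, `bᵢ ≥ b_{i+1}`, and
`Σaᵢ + Σbᵢ = N`. -/
def twoRowCount (n N : ℕ) : ℕ :=
  Nat.card {p : (Fin n → ℕ) × (Fin n → ℕ) //
    (∀ i, p.2 i ≤ p.1 i) ∧
    (∀ i : Fin n, ∀ h : (i : ℕ) + 1 < n, p.1 ⟨(i : ℕ) + 1, h⟩ ≤ p.1 i) ∧
    (∀ i : Fin n, ∀ h : (i : ℕ) + 1 < n, p.2 ⟨(i : ℕ) + 1, h⟩ ≤ p.2 i) ∧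
    (∑ i, p.1 i) + (∑ i, p.2 i) = N}

/-!
Write the plane partition as two partitions `a ⊇ b` with at most `n` parts. With the
running minimum `Mᵢ = min_{j ≤ i} (aⱼ - bⱼ)`, the map `(a, b) ↦ (A, B)`, `Aᵢ = aᵢ - Mᵢ`,
`Bᵢ = Mᵢ + bᵢ₊₁`, is a bijection onto pairs of arbitrary partitions with at most `n`
parts, and `|a| + |b| = |A| + |B| + A₀`; the inverse recovers `Mᵢ` as
`max_{i ≤ j < n} (Bⱼ - Aⱼ₊₁)⁺`. Encoding a partition by its differences
`xᵢ = Aᵢ - Aᵢ₊₁` turns `|A|` into `∑ (i + 1) xᵢ` and `A₀` into `∑ xᵢ`, so two-rowed plane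
partitions of `N` correspond to the solutions of `∑ (i + 2) xᵢ + ∑ (i + 1) yᵢ = N`, whose
generating function is `∏_{i<n} 1/((1 - q^{i+1})(1 - q^{i+2}))`.
-/

open Finset

namespace TwoRowPlanePartition

section WeightedCount

variable {R : Type*} [CommRing R] {ι : Type*} [Fintype ι]

theorem expand_mk_one_mul_one_sub_X_pow (w : ℕ) (hw : w ≠ 0) :
    expand w hw (mk 1 : R⟦X⟧) * (1 - X ^ w) = 1 := by
  simpa [expand_X] using congrArg (expand w hw) (mk_one_mul_one_sub_eq_one (S := R))

def weightedSolutionsEquiv [DecidableEq ι] (w : ι → ℕ) (hw : ∀ i, w i ≠ 0) (N : ℕ) :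
    {x : ι → ℕ // ∑ i, w i * x i = N} ≃
      {l // l ∈ (finsuppAntidiag univ N).filter fun l : ι →₀ ℕ => ∀ i, w i ∣ l i} where
  toFun x := ⟨Finsupp.equivFunOnFinite.symm fun i => w i * x.1 i, by simpa using x.2⟩
  invFun l := ⟨fun i => l.1 i / w i, by
    obtain ⟨hsum, hdvd⟩ := mem_filter.1 l.2
    simp only [Nat.mul_div_cancel' (hdvd _)]
    simpa using (mem_finsuppAntidiag.1 hsum).1⟩
  left_inv x := by ext i; simp [Nat.mul_div_cancel_left _ (Nat.pos_of_ne_zero (hw i))]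
  right_inv l := by
    ext i
    simp [Nat.mul_div_cancel' ((mem_filter.1 l.2).2 i)]

theorem mk_card_weightedSolutions_eq_prod (w : ι → ℕ) (hw : ∀ i, w i ≠ 0) :
    mk (fun N => (Nat.card {x : ι → ℕ // ∑ i, w i * x i = N} : R)) =
      ∏ i, expand (w i) (hw i) (mk 1) := by
  classical
  ext N
  rw [coeff_mk, coeff_prod, Nat.card_congr (weightedSolutionsEquiv w hw N), Nat.card_eq_finsetCard]
  simp only [coeff_expand, coeff_mk, Pi.one_apply, prod_boole, mem_univ, true_implies]
  rw [sum_boole]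

theorem mk_card_weightedSolutions_mul_prod (w : ι → ℕ) (hw : ∀ i, w i ≠ 0) :
    mk (fun N => (Nat.card {x : ι → ℕ // ∑ i, w i * x i = N} : R)) *
      ∏ i, (1 - X ^ w i) = 1 := by
  rw [mk_card_weightedSolutions_eq_prod w hw, ← prod_mul_distrib]
  exact prod_eq_one fun i _ => expand_mk_one_mul_one_sub_X_pow (w i) (hw i)

end WeightedCount

/-- `A` lists the parts of a partition with at most `n` parts, padded with zeros. -/
def IsPartSeq (n : ℕ) (A : ℕ → ℕ) : Prop := Antitone A ∧ ∀ i, n ≤ i → A i = 0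

section SuffixSum

variable {n : ℕ} (x : Fin n → ℕ)

def suffixSum (j : ℕ) : ℕ := ∑ i : Fin n, if j ≤ (i : ℕ) then x i else 0

theorem suffixSum_of_lt (j : Fin n) : suffixSum x j = x j + suffixSum x (j + 1) := by
  rw [suffixSum, suffixSum, ← Fintype.sum_ite_eq' j x, ← sum_add_distrib]
  refine sum_congr rfl fun i _ => ?_
  by_cases hij : j = i
  · subst hij; simp
  · have : (j : ℕ) ≠ i := Fin.val_ne_of_ne hij
    have hsucc : (j : ℕ) + 1 ≤ i ↔ (j : ℕ) ≤ i := by omega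
    by_cases h : (j : ℕ) ≤ i <;> simp [Ne.symm hij, h, hsucc]

theorem suffixSum_of_le {j : ℕ} (h : n ≤ j) : suffixSum x j = 0 :=
  sum_eq_zero fun i _ => if_neg (by omega)

theorem isPartSeq_suffixSum : IsPartSeq n (suffixSum x) :=
  ⟨fun _ _ hjk => sum_le_sum fun i _ => by split_ifs <;> omega,
    fun _ => suffixSum_of_le x⟩

theorem suffixSum_zero : suffixSum x 0 = ∑ i, x i := by simp [suffixSum]

theorem sum_range_suffixSum :
    ∑ j ∈ range n, suffixSum x j = ∑ i : Fin n, ((i : ℕ) + 1) * x i := by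
  simp only [suffixSum]
  rw [sum_comm]
  refine sum_congr rfl fun i _ => ?_
  have : (range n).filter (· ≤ (i : ℕ)) = range (i + 1) := by
    ext j
    simp only [mem_filter, mem_range]
    omega
  rw [← sum_filter, this, sum_const, card_range, smul_eq_mul]

end SuffixSum

theorem suffixSum_diff_eq {n : ℕ} {A : ℕ → ℕ} (hA : IsPartSeq n A) (j : ℕ) :
    suffixSum (fun i : Fin n => A i - A (i + 1)) j = A j := by
  rcases le_or_gt n j with hj | hj
  · rw [suffixSum_of_le _ hj, hA.2 j hj]
  refine Nat.decreasingInduction (motive := fun k _ => suffixSum _ k = A k) (fun k hk ih => ?_)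
    (by rw [suffixSum_of_le _ le_rfl, hA.2 n le_rfl]) hj.le
  rw [suffixSum_of_lt _ ⟨k, hk⟩]
  simp only [ih]
  have : A (k + 1) ≤ A k := hA.1 (Nat.le_succ k)
  omega

def partSeqDiffEquiv (n : ℕ) : {A // IsPartSeq n A} ≃ (Fin n → ℕ) where
  toFun A i := A.1 i - A.1 (i + 1)
  invFun x := ⟨suffixSum x, isPartSeq_suffixSum x⟩
  left_inv A := Subtype.ext (funext (suffixSum_diff_eq A.2))
  right_inv x := funext fun j => by simp only [suffixSum_of_lt x j]; omega

theorem sum_range_eq_sum_partSeqDiffEquiv {n : ℕ} (A : {A // IsPartSeq n A}) :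
    ∑ j ∈ range n, A.1 j = ∑ i : Fin n, ((i : ℕ) + 1) * partSeqDiffEquiv n A i := by
  conv_lhs => rw [← (partSeqDiffEquiv n).symm_apply_apply A]
  exact sum_range_suffixSum _

theorem apply_zero_eq_sum_partSeqDiffEquiv {n : ℕ} (A : {A // IsPartSeq n A}) :
    A.1 0 = ∑ i, partSeqDiffEquiv n A i := by
  conv_lhs => rw [← (partSeqDiffEquiv n).symm_apply_apply A]
  exact suffixSum_zero _

section PartPair

def minGap (a b : ℕ → ℕ) : ℕ → ℕ
  | 0 => a 0 - b 0
  | i + 1 => min (minGap a b i) (a (i + 1) - b (i + 1))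

def toPartPair (a b : ℕ → ℕ) : (ℕ → ℕ) × (ℕ → ℕ) :=
  (fun i => a i - minGap a b i, fun i => minGap a b i + b (i + 1))

def maxExcess (n : ℕ) (A B : ℕ → ℕ) (i : ℕ) : ℕ :=
  (Ico i n).sup fun j => B j - A (j + 1)

def ofPartPair (n : ℕ) (A B : ℕ → ℕ) : (ℕ → ℕ) × (ℕ → ℕ) :=
  (fun i => A i + maxExcess n A B i, fun | 0 => A 0 | i + 1 => B i - maxExcess n A B i)

variable {n i : ℕ} {a b A B : ℕ → ℕ}

theorem minGap_zero : minGap a b 0 = a 0 - b 0 := rfl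

theorem minGap_succ : minGap a b (i + 1) = min (minGap a b i) (a (i + 1) - b (i + 1)) := rfl

theorem toPartPair_fst_apply : (toPartPair a b).1 i = a i - minGap a b i := rfl

theorem toPartPair_snd_apply : (toPartPair a b).2 i = minGap a b i + b (i + 1) := rfl

theorem ofPartPair_fst_apply : (ofPartPair n A B).1 i = A i + maxExcess n A B i := rfl

theorem ofPartPair_snd_zero : (ofPartPair n A B).2 0 = A 0 := rfl

theorem ofPartPair_snd_succ : (ofPartPair n A B).2 (i + 1) = B i - maxExcess n A B i := rfl

theorem minGap_le (a b : ℕ → ℕ) (i : ℕ) : minGap a b i ≤ a i - b i := by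
  cases i <;> simp [minGap]

theorem minGap_eq_zero (ha : IsPartSeq n a) (hi : n ≤ i) : minGap a b i = 0 := by
  have := minGap_le a b i
  rw [ha.2 i hi] at this
  omega

theorem isPartSeq_toPartPair_fst (hab : ∀ i, b i ≤ a i) (ha : IsPartSeq n a)
    (hb : IsPartSeq n b) : IsPartSeq n (toPartPair a b).1 := by
  refine ⟨antitone_nat_of_succ_le fun i => ?_, fun i hi => by simp [toPartPair, ha.2 i hi]⟩
  have : a (i + 1) ≤ a i := ha.1 (Nat.le_succ i)
  have : b (i + 1) ≤ b i := hb.1 (Nat.le_succ i)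
  have := minGap_le a b i; have := hab i; have := hab (i + 1)
  rw [toPartPair_fst_apply, toPartPair_fst_apply, minGap_succ]
  omega

theorem isPartSeq_toPartPair_snd (ha : IsPartSeq n a) (hb : IsPartSeq n b) :
    IsPartSeq n (toPartPair a b).2 :=
  ⟨antitone_nat_of_succ_le fun i => add_le_add (min_le_left _ _) (hb.1 (Nat.le_succ _)),
    fun i hi => by simp [toPartPair, minGap_eq_zero ha hi, hb.2 (i + 1) (by omega)]⟩

theorem sum_toPartPair (hab : ∀ i, b i ≤ a i) (hb : IsPartSeq n b) :
    ∑ i ∈ range n, ((toPartPair a b).1 i + (toPartPair a b).2 i) + (toPartPair a b).1 0 =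
      ∑ i ∈ range n, (a i + b i) := by
  have hpt (i : ℕ) : (toPartPair a b).1 i + (toPartPair a b).2 i = a i + b (i + 1) := by
    have := minGap_le a b i; have := hab i
    rw [toPartPair_fst_apply, toPartPair_snd_apply]; omega
  have h0 : (toPartPair a b).1 0 = b 0 := by
    have := hab 0
    rw [toPartPair_fst_apply, minGap_zero]; omega
  simp only [hpt, h0, sum_add_distrib, add_assoc]
  rw [← sum_range_succ', sum_range_succ, hb.2 n le_rfl, add_zero]

theorem maxExcess_eq_zero (hi : n ≤ i) : maxExcess n A B i = 0 := by
  simp [maxExcess, Ico_eq_empty_of_le hi]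

theorem maxExcess_of_lt (hi : i < n) :
    maxExcess n A B i = max (B i - A (i + 1)) (maxExcess n A B (i + 1)) := by
  rw [maxExcess, ← insert_Ico_add_one_left_eq_Ico hi, sup_insert]
  rfl

theorem maxExcess_succ_le (n : ℕ) (A B : ℕ → ℕ) (i : ℕ) :
    maxExcess n A B (i + 1) ≤ maxExcess n A B i :=
  sup_mono (Ico_subset_Ico_left (Nat.le_succ i))

theorem maxExcess_le (A : ℕ → ℕ) (hB : IsPartSeq n B) (i : ℕ) : maxExcess n A B i ≤ B i :=
  Finset.sup_le fun _ hj => (Nat.sub_le _ _).trans (hB.1 (mem_Ico.1 hj).1)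

theorem sub_maxExcess_le (A : ℕ → ℕ) (hB : IsPartSeq n B) (i : ℕ) :
    B i - maxExcess n A B i ≤ A (i + 1) := by
  rcases lt_or_ge i n with hi | hi
  · rw [maxExcess_of_lt hi]; omega
  · rw [hB.2 i hi]; omega

theorem ofPartPair_snd_le_fst (hB : IsPartSeq n B) :
    ∀ i, (ofPartPair n A B).2 i ≤ (ofPartPair n A B).1 i
  | 0 => Nat.le_add_right _ _
  | i + 1 => (sub_maxExcess_le A hB i).trans (Nat.le_add_right _ _)

theorem isPartSeq_ofPartPair_fst (hA : IsPartSeq n A) : IsPartSeq n (ofPartPair n A B).1 :=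
  ⟨antitone_nat_of_succ_le fun i => add_le_add (hA.1 (Nat.le_succ i)) (maxExcess_succ_le n A B i),
    fun i hi => by simp [ofPartPair, hA.2 i hi, maxExcess_eq_zero hi]⟩

theorem isPartSeq_ofPartPair_snd (hA : IsPartSeq n A) (hB : IsPartSeq n B) :
    IsPartSeq n (ofPartPair n A B).2 := by
  refine ⟨antitone_nat_of_succ_le fun i => ?_, fun i hi => ?_⟩
  · rcases i with _ | i
    · exact (sub_maxExcess_le A hB 0).trans (hA.1 (Nat.le_succ 0))
    rw [ofPartPair_snd_succ, ofPartPair_snd_succ]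
    rcases lt_or_ge i n with hi | hi
    · have := maxExcess_of_lt (A := A) (B := B) hi
      have := sub_maxExcess_le A hB (i + 1)
      have : A (i + 1 + 1) ≤ A (i + 1) := hA.1 (Nat.le_succ _)
      have : B (i + 1) ≤ B i := hB.1 (Nat.le_succ _)
      omega
    · simp [hB.2 i hi, hB.2 (i + 1) (by omega)]
  · have := ofPartPair_snd_le_fst (A := A) hB i
    rw [(isPartSeq_ofPartPair_fst (B := B) hA).2 i hi] at this
    omega

theorem maxExcess_toPartPair (hab : ∀ i, b i ≤ a i) (ha : IsPartSeq n a) (i : ℕ) :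
    maxExcess n (toPartPair a b).1 (toPartPair a b).2 i = minGap a b i := by
  rcases le_or_gt n i with hi | hi
  · rw [maxExcess_eq_zero hi, minGap_eq_zero ha hi]
  refine Nat.decreasingInduction (motive := fun k _ => maxExcess n _ _ k = minGap a b k)
    (fun k hk ih => ?_) (by rw [maxExcess_eq_zero le_rfl, minGap_eq_zero ha le_rfl]) hi.le
  rw [maxExcess_of_lt hk, ih, toPartPair_snd_apply, toPartPair_fst_apply, minGap_succ]
  have := hab (k + 1)
  omega

theorem ofPartPair_toPartPair (hab : ∀ i, b i ≤ a i) (ha : IsPartSeq n a) :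
    ofPartPair n (toPartPair a b).1 (toPartPair a b).2 = (a, b) := by
  have hM := maxExcess_toPartPair hab ha
  refine Prod.ext (funext fun i => ?_) (funext fun i => ?_) <;> dsimp only
  · have := minGap_le a b i; have := hab i
    rw [ofPartPair_fst_apply, hM, toPartPair_fst_apply]; omega
  · rcases i with _ | i
    · have := hab 0
      rw [ofPartPair_snd_zero, toPartPair_fst_apply, minGap_zero]; omega
    · rw [ofPartPair_snd_succ, hM, toPartPair_snd_apply]; omega

theorem minGap_ofPartPair (i : ℕ) :
    minGap (ofPartPair n A B).1 (ofPartPair n A B).2 i = maxExcess n A B i := by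
  induction i with
  | zero => rw [minGap_zero, ofPartPair_fst_apply, ofPartPair_snd_zero]; omega
  | succ i ih =>
    rw [minGap_succ, ih, ofPartPair_fst_apply, ofPartPair_snd_succ]
    have := maxExcess_succ_le n A B i
    rcases lt_or_ge i n with hi | hi
    · have := maxExcess_of_lt (A := A) (B := B) hi; omega
    · rw [maxExcess_eq_zero hi, maxExcess_eq_zero (by omega : n ≤ i + 1)]; simp

theorem toPartPair_ofPartPair (hB : IsPartSeq n B) :
    toPartPair (ofPartPair n A B).1 (ofPartPair n A B).2 = (A, B) := by
  have hM := minGap_ofPartPair (n := n) (A := A) (B := B)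
  refine Prod.ext (funext fun i => ?_) (funext fun i => ?_) <;> dsimp only
  · rw [toPartPair_fst_apply, hM, ofPartPair_fst_apply]; omega
  · have := maxExcess_le A hB i
    rw [toPartPair_snd_apply, hM, ofPartPair_snd_succ]; omega

end PartPair

def extendByZero {n : ℕ} (f : Fin n → ℕ) (i : ℕ) : ℕ := if h : i < n then f ⟨i, h⟩ else 0

theorem isPartSeq_extendByZero {n : ℕ} {f : Fin n → ℕ}
    (hf : ∀ i : Fin n, ∀ h : (i : ℕ) + 1 < n, f ⟨(i : ℕ) + 1, h⟩ ≤ f i) :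
    IsPartSeq n (extendByZero f) := by
  refine ⟨antitone_nat_of_succ_le fun i => ?_, fun i hi => dif_neg (by omega)⟩
  unfold extendByZero
  split_ifs with h₁ h₂
  · exact hf ⟨i, h₂⟩ h₁
  all_goals omega

theorem extendByZero_le_extendByZero {n : ℕ} {f g : Fin n → ℕ} (hfg : ∀ i, f i ≤ g i) (i : ℕ) :
    extendByZero f i ≤ extendByZero g i := by
  unfold extendByZero
  split_ifs with h
  exacts [hfg ⟨i, h⟩, le_rfl]

theorem extendByZero_restrict {n : ℕ} {A : ℕ → ℕ} (hA : ∀ i, n ≤ i → A i = 0) :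
    extendByZero (fun i : Fin n => A i) = A := by
  funext i
  unfold extendByZero
  split_ifs with h
  · rfl
  · exact (hA i (by omega)).symm

theorem sum_range_extendByZero {n : ℕ} (f : Fin n → ℕ) :
    ∑ i ∈ Finset.range n, extendByZero f i = ∑ i, f i := by
  rw [← Fin.sum_univ_eq_sum_range]
  exact Finset.sum_congr rfl fun i _ => dif_pos i.2

def TwoRowPP (n : ℕ) := {p : (Fin n → ℕ) × (Fin n → ℕ) //
    (∀ i, p.2 i ≤ p.1 i) ∧
    (∀ i : Fin n, ∀ h : (i : ℕ) + 1 < n, p.1 ⟨(i : ℕ) + 1, h⟩ ≤ p.1 i) ∧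
    (∀ i : Fin n, ∀ h : (i : ℕ) + 1 < n, p.2 ⟨(i : ℕ) + 1, h⟩ ≤ p.2 i)}

def PaddedTwoRowPP (n : ℕ) :=
  {p : (ℕ → ℕ) × (ℕ → ℕ) // IsPartSeq n p.1 ∧ IsPartSeq n p.2 ∧ ∀ i, p.2 i ≤ p.1 i}

def twoRowPPEquivPadded (n : ℕ) : TwoRowPP n ≃ PaddedTwoRowPP n where
  toFun p := ⟨(extendByZero p.1.1, extendByZero p.1.2), isPartSeq_extendByZero p.2.2.1,
    isPartSeq_extendByZero p.2.2.2, extendByZero_le_extendByZero p.2.1⟩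
  invFun q := ⟨(fun i => q.1.1 i, fun i => q.1.2 i), fun i => q.2.2.2 i,
    fun _ _ => q.2.1.1 (Nat.le_succ _), fun _ _ => q.2.2.1.1 (Nat.le_succ _)⟩
  left_inv _ := Subtype.ext <| Prod.ext (funext fun i => dif_pos i.2) (funext fun i => dif_pos i.2)
  right_inv q := Subtype.ext <| Prod.ext (extendByZero_restrict q.2.1.2)
    (extendByZero_restrict q.2.2.1.2)

def partPairEquiv (n : ℕ) :
    PaddedTwoRowPP n ≃ {q : (ℕ → ℕ) × (ℕ → ℕ) // IsPartSeq n q.1 ∧ IsPartSeq n q.2} where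
  toFun p := ⟨toPartPair p.1.1 p.1.2, isPartSeq_toPartPair_fst p.2.2.2 p.2.1 p.2.2.1,
    isPartSeq_toPartPair_snd p.2.1 p.2.2.1⟩
  invFun q := ⟨ofPartPair n q.1.1 q.1.2, isPartSeq_ofPartPair_fst q.2.1,
    isPartSeq_ofPartPair_snd q.2.1 q.2.2, ofPartPair_snd_le_fst q.2.2⟩
  left_inv p := Subtype.ext (ofPartPair_toPartPair p.2.2.2 p.2.1)
  right_inv q := Subtype.ext (toPartPair_ofPartPair q.2.2)

def twoRowPPEquiv (n : ℕ) : TwoRowPP n ≃ (Fin n ⊕ Fin n → ℕ) :=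
  (twoRowPPEquivPadded n).trans <| (partPairEquiv n).trans <| Equiv.subtypeProdEquivProd.trans <|
    ((partSeqDiffEquiv n).prodCongr (partSeqDiffEquiv n)).trans
      (Equiv.sumArrowEquivProdArrow _ _ _).symm

def partWeight (n : ℕ) : Fin n ⊕ Fin n → ℕ := Sum.elim (fun i => i + 2) (fun i => i + 1)

theorem sum_partWeight_mul_diff {n : ℕ} (A B : {A // IsPartSeq n A}) :
    ∑ i, partWeight n i *
        (Equiv.sumArrowEquivProdArrow _ _ _).symm (partSeqDiffEquiv n A, partSeqDiffEquiv n B) i =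
      ∑ j ∈ range n, (A.1 j + B.1 j) + A.1 0 := by
  simp only [Fintype.sum_sum_type, partWeight, Equiv.sumArrowEquivProdArrow_symm_apply_inl,
    Equiv.sumArrowEquivProdArrow_symm_apply_inr, Sum.elim_inl, Sum.elim_inr]
  rw [sum_add_distrib, sum_range_eq_sum_partSeqDiffEquiv, sum_range_eq_sum_partSeqDiffEquiv,
    apply_zero_eq_sum_partSeqDiffEquiv]
  simp only [← sum_add_distrib]
  exact sum_congr rfl fun i _ => by ring

theorem sum_add_sum_eq_sum_partWeight_mul {n : ℕ} (p : TwoRowPP n) :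
    ∑ i, p.1.1 i + ∑ i, p.1.2 i = ∑ i, partWeight n i * twoRowPPEquiv n p i := by
  calc ∑ i, p.1.1 i + ∑ i, p.1.2 i
      = ∑ i ∈ range n, ((twoRowPPEquivPadded n p).1.1 i + (twoRowPPEquivPadded n p).1.2 i) := by
        rw [sum_add_distrib]
        exact congrArg₂ (· + ·) (sum_range_extendByZero _).symm (sum_range_extendByZero _).symm
    _ = _ := (sum_toPartPair (twoRowPPEquivPadded n p).2.2.2 (twoRowPPEquivPadded n p).2.2.1).symm
    _ = _ :=
      (sum_partWeight_mul_diff ⟨_, (partPairEquiv n _).2.1⟩ ⟨_, (partPairEquiv n _).2.2⟩).symm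

theorem twoRowCount_eq_card_weightedSolutions (n N : ℕ) :
    twoRowCount n N = Nat.card {x : Fin n ⊕ Fin n → ℕ // ∑ i, partWeight n i * x i = N} :=
  calc twoRowCount n N = Nat.card {p : TwoRowPP n // ∑ i, p.1.1 i + ∑ i, p.1.2 i = N} :=
        Nat.card_congr ((Equiv.subtypeSubtypeEquivSubtypeInter (α := (Fin n → ℕ) × (Fin n → ℕ)) _
          (fun p => ∑ i, p.1 i + ∑ i, p.2 i = N)).trans
            (Equiv.subtypeEquivRight fun _ => by simp only [and_assoc])).symm
    _ = _ := Nat.card_congr <| (twoRowPPEquiv n).subtypeEquiv fun p => by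
        rw [sum_add_sum_eq_sum_partWeight_mul]

end TwoRowPlanePartition

open TwoRowPlanePartition

/-- The generating function for two-rowed plane partitions with rows of length
`n` equals `1/((q;q)ₙ (q²;q)ₙ)`, stated with denominators cleared:
`(q;q)ₙ = ∏_{t=0}^{n−1}(1−q^{t+1})` and `(q²;q)ₙ = ∏_{t=0}^{n−1}(1−q^{t+2})`. -/
theorem twoRow_generating_function (n : ℕ) :
    PowerSeries.mk (fun N => (twoRowCount n N : ℤ)) *
      (∏ t ∈ Finset.range n, (1 - (X : PowerSeries ℤ) ^ (t + 1))) *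
      (∏ t ∈ Finset.range n, (1 - (X : PowerSeries ℤ) ^ (t + 2))) = 1 := by
  have hprod : ∏ i, (1 - (X : ℤ⟦X⟧) ^ partWeight n i) =
      (∏ t ∈ range n, (1 - X ^ (t + 1))) * ∏ t ∈ range n, (1 - X ^ (t + 2)) := by
    rw [Fintype.prod_sum_type, mul_comm]
    simp only [partWeight, Sum.elim_inl, Sum.elim_inr,
      Fin.prod_univ_eq_prod_range (fun t : ℕ => (1 : ℤ⟦X⟧) - X ^ (t + 1)),
      Fin.prod_univ_eq_prod_range (fun t : ℕ => (1 : ℤ⟦X⟧) - X ^ (t + 2))]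
  simp only [twoRowCount_eq_card_weightedSolutions, mul_assoc, ← hprod]
  exact mk_card_weightedSolutions_mul_prod (partWeight n) (by rintro (i | i) <;> simp [partWeight])
end
end

section
/- Define G*ₙ(q,s) as the generating function of the system Gₙ: Σ_{t=i}^{n} a_t ≥ Σ_{t=i}^{n} b_t for 1 ≤ i ≤ n with all aᵢ, bᵢ ≥ 0, weighted by q^{Σᵢ i(aᵢ+bᵢ)} except that aₙ is weighted by s instead of qⁿ (i.e. G*ₙ(q,s) = Gₙ(q,q,q²,q²,...,s,qⁿ)). Then G*ₙ(q,s) = 1/((1−s)(1−sq)(q;q)_{n−1}(q²;q)_{n−1}). -/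
/-!
Give the system a slack `K`, i.e. require `Σ_{t ≥ i} b_t ≤ Σ_{t ≥ i} a_t + K`, and let
`U_m(q, s)` count its solutions of length `m` by `q ^ (Σ i (a_i + b_i)) * s ^ K`.

Split off the last pair of a solution counted by `G*ₙ`: if `b_n = 0`, the first `n - 1` pairs
form a solution with slack `a_n`; otherwise lowering `a_n` and `b_n` by one is a bijection onto
all solutions. Hence `G*ₙ = U_{n-1} + s qⁿ G*ₙ`.

Splitting off the last pair `(a, b)` of a solution with slack `K` in the same way, the cases
`b = 0`, `a = 0` and `K = 0` give linear relations between a few auxiliary series; eliminating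
them leaves, with `x = q ^ (m + 1)`,
  `(s - x)(1 - s x)(1 - x²) U_{m+1}(q, s) = s (1 - x²) U_m(q, s) - x (1 - s x) U_m(q, x)`,
where `U_m(q, x)` counts the solutions of length `m + 1` with `b = 0` and `K = 0`.
By induction `U_m (1 - s)(1 - s q)(q; q)_m (q²; q)_m = 1 - s q^(m+1)`, and the theorem follows.
-/

noncomputable section
open Classical

/-- `G*ₙ(q,s) = Gₙ(q,q,q²,q²,…,q^{n−1},q^{n−1},s,qⁿ)`: the generating function
of the triangular system `Σ_{t=i}^{n} a_t ≥ Σ_{t=i}^{n} b_t` (`1 ≤ i ≤ n`,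
all `aᵢ,bᵢ ≥ 0`), where `aᵢ` and `bᵢ` are weighted by `qⁱ` except that `aₙ` is
weighted by `s`.  Variable `0` is `q` and variable `1` is `s`; the coefficient
of `q^M s^K` counts solutions with `aₙ = K` and
`Σ_{i=1}^{n−1} i·aᵢ + Σ_{i=1}^{n} i·bᵢ = M`. -/
def Gstar (n : ℕ) : MvPowerSeries (Fin 2) ℤ :=
  fun d => (Nat.card {p : (Fin n → ℕ) × (Fin n → ℕ) //
    (∀ i : Fin n, ∑ t ∈ Finset.univ.filter (fun t => i ≤ t), p.2 t ≤
                  ∑ t ∈ Finset.univ.filter (fun t => i ≤ t), p.1 t) ∧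
    (∀ h : 0 < n, p.1 ⟨n - 1, by omega⟩ = d 1) ∧
    (∑ i ∈ Finset.univ.filter (fun i : Fin n => (i : ℕ) + 1 < n),
        ((i : ℕ) + 1) * p.1 i) + (∑ i : Fin n, ((i : ℕ) + 1) * p.2 i) = d 0} : ℤ)

open MvPowerSeries Set

section GenFun

variable {α β σ : Type*}

theorem ncard_inter_preimage_comp {γ : Type*} {s : Set α} {w : α → β} {φ : β → γ} {e : γ}
    (hφ : (φ ⁻¹' {e}).Finite) (hw : ∀ d, (s ∩ w ⁻¹' {d}).Finite) :
    (s ∩ (φ ∘ w) ⁻¹' {e}).ncard = ∑ d ∈ hφ.toFinset, (s ∩ w ⁻¹' {d}).ncard := by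
  have hfin : (s ∩ (φ ∘ w) ⁻¹' {e}).Finite :=
    (hφ.biUnion fun d _ => hw d).subset fun x hx => mem_biUnion (x := w x) hx.2 ⟨hx.1, rfl⟩
  rw [ncard_eq_toFinset_card _ hfin,
    Finset.card_eq_sum_card_fiberwise (f := w) (t := hφ.toFinset) fun x hx => by simp_all]
  refine Finset.sum_congr rfl fun d hd => ?_
  rw [ncard_eq_toFinset_card _ (hw d)]
  congr 1
  ext x
  simp only [Finset.mem_filter, Finite.mem_toFinset, mem_inter_iff, mem_preimage,
    mem_singleton_iff, Function.comp_apply]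
  simp only [Finite.mem_toFinset, mem_preimage, mem_singleton_iff] at hd
  constructor
  · rintro ⟨⟨hx, -⟩, rfl⟩
    exact ⟨hx, rfl⟩
  · rintro ⟨hx, rfl⟩
    exact ⟨⟨hx, hd⟩, rfl⟩

-- `ncard` is `0` on infinite sets: counts only add up when the fibres of `w` are finite.
def genFun (s : Set α) (w : α → σ →₀ ℕ) : MvPowerSeries σ ℤ :=
  fun d => ((s ∩ w ⁻¹' {d}).ncard : ℤ)

theorem coeff_genFun (s : Set α) (w : α → σ →₀ ℕ) (d : σ →₀ ℕ) :
    coeff d (genFun s w) = ((s ∩ w ⁻¹' {d}).ncard : ℤ) := rfl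

theorem genFun_of_bijOn {s : Set α} {t : Set β} {f : α → β} {w : α → σ →₀ ℕ}
    {w' : β → σ →₀ ℕ} (hf : BijOn f s t) (hw : ∀ x ∈ s, w' (f x) = w x) :
    genFun t w' = genFun s w := by
  ext d
  rw [coeff_genFun, coeff_genFun]
  have hfib : BijOn f (s ∩ w ⁻¹' {d}) (t ∩ w' ⁻¹' {d}) := by
    refine ⟨fun x hx => ⟨hf.mapsTo hx.1, (hw x hx.1).trans hx.2⟩,
      hf.injOn.mono inter_subset_left, fun y hy => ?_⟩
    obtain ⟨x, hx, rfl⟩ := hf.surjOn hy.1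
    exact ⟨x, ⟨hx, (hw x hx).symm.trans hy.2⟩, rfl⟩
  rw [hfib.ncard_eq]

theorem genFun_add_const (s : Set α) (w : α → σ →₀ ℕ) (e : σ →₀ ℕ) :
    genFun s (fun x => w x + e) = monomial e 1 * genFun s w := by
  ext d
  rw [coeff_monomial_mul, coeff_genFun, coeff_genFun, one_mul]
  split_ifs with h
  · congr 3
    ext x
    simp [eq_tsub_iff_add_eq_of_le h]
  · have hempty : s ∩ (fun x => w x + e) ⁻¹' {d} = ∅ :=
      eq_empty_of_forall_notMem fun x hx => h (le_add_self.trans_eq hx.2)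
    rw [hempty, ncard_empty, Nat.cast_zero]

theorem monomial_mul_genFun_of_bijOn {s : Set α} {t : Set β} {f : α → β}
    {w : α → σ →₀ ℕ} {w' : β → σ →₀ ℕ} {e e' : σ →₀ ℕ} (hf : BijOn f s t)
    (hw : ∀ x ∈ s, w x + e = w' (f x) + e') :
    monomial e 1 * genFun s w = monomial e' 1 * genFun t w' := by
  rw [← genFun_add_const, ← genFun_add_const]
  exact (genFun_of_bijOn hf fun x hx => (hw x hx).symm).symm

theorem genFun_eq_monomial_mul_of_bijOn {s : Set α} {t : Set β} {f : α → β}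
    {w : α → σ →₀ ℕ} {w' : β → σ →₀ ℕ} {e : σ →₀ ℕ} (hf : BijOn f s t)
    (hw : ∀ x ∈ s, w x = w' (f x) + e) :
    genFun s w = monomial e 1 * genFun t w' := by
  simpa using monomial_mul_genFun_of_bijOn (e := 0) hf (by simpa using hw)

theorem genFun_inter_add_sdiff {s : Set α} {w : α → σ →₀ ℕ}
    (hs : ∀ d, (s ∩ w ⁻¹' {d}).Finite) (p : Set α) :
    genFun (s ∩ p) w + genFun (s \ p) w = genFun s w := by
  ext d
  rw [map_add, coeff_genFun, coeff_genFun, coeff_genFun, ← Nat.cast_add,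
    ← ncard_inter_add_ncard_sdiff_eq_ncard _ p (hs d)]
  congr 3 <;> ext x <;> simp only [mem_inter_iff, mem_sdiff] <;> tauto

theorem genFun_singleton (x : α) (w : α → σ →₀ ℕ) : genFun {x} w = monomial (w x) 1 := by
  ext d
  rw [coeff_genFun, coeff_monomial]
  split_ifs with h
  · rw [h, inter_eq_left.2 (by simp), ncard_singleton, Nat.cast_one]
  · have hempty : {x} ∩ w ⁻¹' {d} = ∅ :=
      eq_empty_of_forall_notMem fun y ⟨hyx, hy⟩ => h (hyx ▸ hy).symm
    rw [hempty, ncard_empty, Nat.cast_zero]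

end GenFun

-- The exponent of `q ^ M * s ^ K`, where `q = X 0` and `s = X 1`.
def bideg (M K : ℕ) : Fin 2 →₀ ℕ := Finsupp.single 0 M + Finsupp.single 1 K

@[simp] theorem bideg_apply_zero (M K : ℕ) : bideg M K 0 = M := by simp [bideg]

@[simp] theorem bideg_apply_one (M K : ℕ) : bideg M K 1 = K := by simp [bideg]

theorem bideg_eta (d : Fin 2 →₀ ℕ) : bideg (d 0) (d 1) = d := by
  ext i
  fin_cases i <;> simp

theorem bideg_inj {M K M' K' : ℕ} : bideg M K = bideg M' K' ↔ M = M' ∧ K = K' := by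
  refine ⟨fun h => ⟨by simpa using congrArg (· 0) h, by simpa using congrArg (· 1) h⟩, ?_⟩
  rintro ⟨rfl, rfl⟩
  rfl

theorem bideg_eq_iff {M K : ℕ} {d : Fin 2 →₀ ℕ} : bideg M K = d ↔ M = d 0 ∧ K = d 1 := by
  rw [← bideg_eta d, bideg_inj, bideg_apply_zero, bideg_apply_one]

theorem bideg_add_bideg (M K M' K' : ℕ) : bideg M K + bideg M' K' = bideg (M + M') (K + K') := by
  ext i
  fin_cases i <;> simp

theorem monomial_bideg (M K : ℕ) :
    monomial (bideg M K) (1 : ℤ) = X 0 ^ M * X 1 ^ K := by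
  rw [X_pow_eq, X_pow_eq, monomial_mul_monomial, one_mul, bideg]

theorem hasSubst_X_X_pow {c : ℕ} (hc : c ≠ 0) :
    HasSubst ![(X 0 : MvPowerSeries (Fin 2) ℤ), X 0 ^ c] :=
  hasSubst_of_constantCoeff_zero fun i => by fin_cases i <;> simp [hc]

theorem subst_genFun {α : Type*} {s : Set α} {w : α → Fin 2 →₀ ℕ}
    (hs : ∀ d, (s ∩ w ⁻¹' {d}).Finite) {c : ℕ} (hc : c ≠ 0) :
    subst ![X 0, X 0 ^ c] (genFun s w) = genFun s (fun x => bideg (w x 0 + c * w x 1) 0) := by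
  set φ : (Fin 2 →₀ ℕ) → Fin 2 →₀ ℕ := fun d => bideg (d 0 + c * d 1) 0
  have hprod (d : Fin 2 →₀ ℕ) :
      (d.prod fun i k => ![(X 0 : MvPowerSeries (Fin 2) ℤ), X 0 ^ c] i ^ k) =
        monomial (φ d) 1 := by
    rw [Finsupp.prod_fintype _ _ (by simp), Fin.prod_univ_two, monomial_bideg]
    simp [← pow_mul, ← pow_add, mul_comm]
  ext e
  have hφ : (φ ⁻¹' {e}).Finite := by
    refine (((finite_Iic (e 0)).prod (finite_Iic (e 0))).image
      fun p : ℕ × ℕ => bideg p.1 p.2).subset ?_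
    intro d (hd : φ d = e)
    refine ⟨(d 0, d 1), ⟨?_, ?_⟩, bideg_eta d⟩ <;>
    · have := congrArg (· 0) hd
      simp only [φ, bideg_apply_zero] at this
      simp only [mem_Iic]
      nlinarith [Nat.one_le_iff_ne_zero.2 hc]
  rw [coeff_subst (hasSubst_X_X_pow hc), coeff_genFun,
    show (fun x => bideg (w x 0 + c * w x 1) 0) = φ ∘ w from rfl,
    ncard_inter_preimage_comp hφ hs, Nat.cast_sum,
    finsum_eq_sum_of_support_subset _ (s := hφ.toFinset) ?support]
  case support =>
    intro d hd
    simp only [hprod, coeff_monomial, Function.mem_support, smul_eq_mul] at hd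
    simp only [Finite.coe_toFinset, mem_preimage, mem_singleton_iff]
    by_contra h
    exact hd (by simp [Ne.symm h])
  refine Finset.sum_congr rfl fun d hd => ?_
  simp only [Finite.mem_toFinset, mem_preimage, mem_singleton_iff] at hd
  rw [hprod, coeff_monomial, if_pos hd.symm, smul_eq_mul, mul_one, coeff_genFun]

theorem one_sub_ne_zero_of_constantCoeff_eq_zero {σ R : Type*} [Ring R] [Nontrivial R]
    {f : MvPowerSeries σ R} (hf : constantCoeff f = 0) : 1 - f ≠ 0 := fun h => by
  simpa [hf] using congrArg constantCoeff h

theorem X_one_sub_X_zero_pow_ne_zero (c : ℕ) :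
    (X 1 - X 0 ^ c : MvPowerSeries (Fin 2) ℤ) ≠ 0 := by
  intro h
  have := congrArg (coeff (Finsupp.single (1 : Fin 2) 1)) h
  simp [X_pow_eq, coeff_X, coeff_monomial, Finsupp.single_eq_single_iff] at this

/-- A solution of length `m + 1` with slack `K`, taken apart into its first `m` pairs `init`,
its last pair `(a, b)` and `slack = K`. The first `m` pairs must solve the system with slack
`K + a - b`; `extension` reads the slack of `init` off as its `s`-degree. -/
@[ext] structure Appended (ι : Type*) where
  init : ι
  a : ℕ
  b : ℕ
  slack : ℕ

namespace Appended

variable {ι : Type*} {Y : Set ι} {w : ι → Fin 2 →₀ ℕ} {c : ℕ}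

def extension (Y : Set ι) (w : ι → Fin 2 →₀ ℕ) : Set (Appended ι) :=
  {x | x.init ∈ Y ∧ w x.init 1 + x.b = x.a + x.slack}

def weight (w : ι → Fin 2 →₀ ℕ) (c : ℕ) (x : Appended ι) : Fin 2 →₀ ℕ :=
  bideg (w x.init 0 + c * (x.a + x.b)) x.slack

-- The grading of `G*`, in which the last `a` is counted by `s`.
def lastWeight (w : ι → Fin 2 →₀ ℕ) (c : ℕ) (x : Appended ι) : Fin 2 →₀ ℕ :=
  bideg (w x.init 0 + c * x.b) x.a

theorem finite_bounded (hY : ∀ d, (Y ∩ w ⁻¹' {d}).Finite) (B : ℕ) :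
    {x : Appended ι | x.init ∈ Y ∧ w x.init 0 ≤ B ∧ w x.init 1 ≤ B ∧
      x.a ≤ B ∧ x.b ≤ B ∧ x.slack ≤ B}.Finite := by
  have hYB : (⋃ i ∈ Iic B, ⋃ j ∈ Iic B, Y ∩ w ⁻¹' {bideg i j}).Finite :=
    (finite_Iic B).biUnion fun i _ => (finite_Iic B).biUnion fun j _ => hY _
  refine ((hYB.prod ((finite_Iic B).prod ((finite_Iic B).prod (finite_Iic B)))).image
    fun p => (⟨p.1, p.2.1, p.2.2.1, p.2.2.2⟩ : Appended ι)).subset ?_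
  rintro x ⟨hx, h0, h1, ha, hb, hs⟩
  refine ⟨(x.init, x.a, x.b, x.slack), ⟨?_, ha, hb, hs⟩, rfl⟩
  simp only [mem_iUnion, mem_Iic]
  exact ⟨_, h0, _, h1, hx, (bideg_eta _).symm⟩

theorem finite_weight_fiber (hc : c ≠ 0) (hY : ∀ d, (Y ∩ w ⁻¹' {d}).Finite)
    (d : Fin 2 →₀ ℕ) : (extension Y w ∩ weight w c ⁻¹' {d}).Finite := by
  refine (finite_bounded hY (d 0 + d 1)).subset ?_
  rintro x ⟨⟨hx, hsl⟩, hd⟩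
  obtain ⟨h0, h1⟩ := bideg_eq_iff.1 (hd : weight w c x = d)
  have hab : x.a + x.b ≤ c * (x.a + x.b) := Nat.le_mul_of_pos_left _ (Nat.pos_of_ne_zero hc)
  exact ⟨hx, by omega, by omega, by omega, by omega, by omega⟩

theorem finite_lastWeight_fiber (hY : ∀ d, (Y ∩ w ⁻¹' {d}).Finite) (d : Fin 2 →₀ ℕ) :
    (extension Y w ∩ {x | x.slack = 0} ∩ lastWeight w c ⁻¹' {d}).Finite := by
  refine (finite_bounded hY (d 0 + d 1)).subset ?_
  rintro x ⟨⟨⟨hx, hsl⟩, hs0 : x.slack = 0⟩, hd⟩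
  obtain ⟨h0, h1⟩ := bideg_eq_iff.1 (hd : lastWeight w c x = d)
  exact ⟨hx, by omega, by omega, by omega, by omega, by omega⟩

theorem bijOn_init_of_b_eq_zero_of_slack_eq_zero :
    BijOn init (extension Y w ∩ {x | x.slack = 0} ∩ {x | x.b = 0}) Y := by
  refine InvOn.bijOn (f' := fun y => ⟨y, w y 1, 0, 0⟩) ⟨?_, ?_⟩ ?_ ?_ <;> intro x hx <;>
    simp_all [extension, Appended.ext_iff]
  omega

theorem bijOn_init_of_b_eq_zero_of_a_eq_zero :
    BijOn init (extension Y w ∩ {x | x.b = 0} ∩ {x | x.a = 0}) Y := by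
  refine InvOn.bijOn (f' := fun y => ⟨y, 0, 0, w y 1⟩) ⟨?_, ?_⟩ ?_ ?_ <;> intro x hx <;>
    simp_all [extension, Appended.ext_iff]
  omega

theorem bijOn_pred_a_pred_b :
    BijOn (fun x => ⟨x.init, x.a - 1, x.b - 1, x.slack⟩)
      ((extension Y w ∩ {x | x.slack = 0}) \ {x | x.b = 0})
      (extension Y w ∩ {x | x.slack = 0}) := by
  refine InvOn.bijOn (f' := fun x => ⟨x.init, x.a + 1, x.b + 1, x.slack⟩) ⟨?_, ?_⟩ ?_ ?_ <;>
    intro x hx <;> simp_all [extension, Appended.ext_iff] <;> omega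

theorem bijOn_pred_b_pred_slack :
    BijOn (fun x => ⟨x.init, x.a, x.b - 1, x.slack - 1⟩)
      ((extension Y w \ {x | x.b = 0}) \ {x | x.slack = 0}) (extension Y w) := by
  refine InvOn.bijOn (f' := fun x => ⟨x.init, x.a, x.b + 1, x.slack + 1⟩) ⟨?_, ?_⟩ ?_ ?_ <;>
    intro x hx <;> simp_all [extension, Appended.ext_iff] <;> omega

theorem bijOn_pred_a_succ_slack :
    BijOn (fun x => ⟨x.init, x.a - 1, x.b, x.slack + 1⟩)
      ((extension Y w ∩ {x | x.b = 0}) \ {x | x.a = 0})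
      ((extension Y w ∩ {x | x.b = 0}) \ {x | x.slack = 0}) := by
  refine InvOn.bijOn (f' := fun x => ⟨x.init, x.a + 1, x.b, x.slack - 1⟩) ⟨?_, ?_⟩ ?_ ?_ <;>
    intro x hx <;> simp_all [extension, Appended.ext_iff] <;> omega

theorem genFun_pred_a_pred_b :
    genFun ((extension Y w ∩ {x | x.slack = 0}) \ {x | x.b = 0}) (weight w c) =
      X 0 ^ (2 * c) * genFun (extension Y w ∩ {x | x.slack = 0}) (weight w c) := by
  rw [genFun_eq_monomial_mul_of_bijOn (e := bideg (2 * c) 0) bijOn_pred_a_pred_b ?_,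
    monomial_bideg, pow_zero, mul_one]
  intro x hx
  simp only [extension, mem_sdiff, mem_inter_iff, mem_ofPred_eq] at hx
  have hab : x.a - 1 + (x.b - 1) + 2 = x.a + x.b := by omega
  rw [weight, weight, bideg_add_bideg, bideg_inj, ← hab]
  constructor <;> ring

theorem genFun_extension (hc : c ≠ 0) (hY : ∀ d, (Y ∩ w ⁻¹' {d}).Finite) :
    genFun (extension Y w) (weight w c) =
      X 1 * X 0 ^ c * genFun (extension Y w) (weight w c) +
        genFun (extension Y w ∩ {x | x.b = 0}) (weight w c) +
        X 0 ^ (2 * c) * genFun (extension Y w ∩ {x | x.slack = 0}) (weight w c) := by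
  have hfin := finite_weight_fiber hc hY
  have hshift : genFun ((extension Y w \ {x | x.b = 0}) \ {x | x.slack = 0}) (weight w c) =
      X 1 * X 0 ^ c * genFun (extension Y w) (weight w c) := by
    rw [genFun_eq_monomial_mul_of_bijOn (e := bideg c 1) bijOn_pred_b_pred_slack ?_,
      monomial_bideg, pow_one, mul_comm (X 0 ^ c)]
    intro x hx
    simp only [extension, mem_sdiff, mem_ofPred_eq] at hx
    have hb : x.a + (x.b - 1) + 1 = x.a + x.b := by omega
    rw [weight, weight, bideg_add_bideg, bideg_inj, ← hb]
    dsimp only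
    constructor
    · ring
    · omega
  conv_lhs => rw [← genFun_inter_add_sdiff hfin {x | x.b = 0},
    ← genFun_inter_add_sdiff (fun d => (hfin d).subset (inter_subset_inter_left _ sdiff_subset))
      {x | x.slack = 0}, sdiff_inter_right_comm, genFun_pred_a_pred_b, hshift]
  ring

theorem genFun_slack_eq_zero (hc : c ≠ 0) (hY : ∀ d, (Y ∩ w ⁻¹' {d}).Finite) :
    genFun (extension Y w ∩ {x | x.slack = 0}) (weight w c) =
      genFun (extension Y w ∩ {x | x.slack = 0} ∩ {x | x.b = 0}) (weight w c) +
        X 0 ^ (2 * c) * genFun (extension Y w ∩ {x | x.slack = 0}) (weight w c) := by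
  conv_lhs => rw [← genFun_inter_add_sdiff (fun d => (finite_weight_fiber hc hY d).subset
    (inter_subset_inter_left _ inter_subset_left)) {x | x.b = 0}, genFun_pred_a_pred_b]

theorem genFun_b_eq_zero (hc : c ≠ 0) (hY : ∀ d, (Y ∩ w ⁻¹' {d}).Finite) :
    X 1 * genFun (extension Y w ∩ {x | x.b = 0}) (weight w c) +
        X 0 ^ c * genFun (extension Y w ∩ {x | x.slack = 0} ∩ {x | x.b = 0}) (weight w c) =
      X 1 * genFun Y w + X 0 ^ c * genFun (extension Y w ∩ {x | x.b = 0}) (weight w c) := by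
  have hfin d : ((extension Y w ∩ {x | x.b = 0}) ∩ weight w c ⁻¹' {d}).Finite :=
    (finite_weight_fiber hc hY d).subset (inter_subset_inter_left _ inter_subset_left)
  have hinit :
      genFun (extension Y w ∩ {x | x.b = 0} ∩ {x | x.a = 0}) (weight w c) = genFun Y w := by
    refine (genFun_of_bijOn bijOn_init_of_b_eq_zero_of_a_eq_zero fun x hx => ?_).symm
    obtain ⟨⟨⟨-, hsl⟩, hb : x.b = 0⟩, ha : x.a = 0⟩ := hx
    rw [weight, ha, hb, show x.slack = w x.init 1 by omega, add_zero, mul_zero, add_zero,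
      bideg_eta]
  have hshift : X 1 * genFun ((extension Y w ∩ {x | x.b = 0}) \ {x | x.a = 0}) (weight w c) =
      X 0 ^ c * genFun ((extension Y w ∩ {x | x.b = 0}) \ {x | x.slack = 0}) (weight w c) := by
    have hw : ∀ x ∈ (extension Y w ∩ {x | x.b = 0}) \ {x | x.a = 0},
        weight w c x + bideg 0 1 = weight w c ⟨x.init, x.a - 1, x.b, x.slack + 1⟩ + bideg c 0 := by
      intro x hx
      simp only [extension, mem_sdiff, mem_inter_iff, mem_ofPred_eq] at hx
      have ha : x.a - 1 + x.b + 1 = x.a + x.b := by omega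
      rw [weight, weight, bideg_add_bideg, bideg_add_bideg, bideg_inj, ← ha]
      dsimp only
      constructor
      · ring
      · omega
    simpa [monomial_bideg] using monomial_mul_genFun_of_bijOn bijOn_pred_a_succ_slack hw
  have hsplit_a := genFun_inter_add_sdiff hfin {x | x.a = 0}
  have hsplit_slack := genFun_inter_add_sdiff hfin {x | x.slack = 0}
  rw [hinit] at hsplit_a
  rw [inter_right_comm] at hsplit_slack
  linear_combination (-X 1) * hsplit_a + X 0 ^ c * hsplit_slack + hshift

theorem genFun_slack_eq_zero_b_eq_zero (hc : c ≠ 0) (hY : ∀ d, (Y ∩ w ⁻¹' {d}).Finite) :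
    genFun (extension Y w ∩ {x | x.slack = 0} ∩ {x | x.b = 0}) (weight w c) =
      subst ![X 0, X 0 ^ c] (genFun Y w) := by
  rw [subst_genFun hY hc]
  refine (genFun_of_bijOn bijOn_init_of_b_eq_zero_of_slack_eq_zero fun x hx => ?_).symm
  obtain ⟨⟨⟨-, hsl⟩, hs : x.slack = 0⟩, hb : x.b = 0⟩ := hx
  rw [weight, hs, hb, show x.a = w x.init 1 by omega, add_zero]

theorem genFun_lastWeight (hY : ∀ d, (Y ∩ w ⁻¹' {d}).Finite) :
    genFun (extension Y w ∩ {x | x.slack = 0}) (lastWeight w c) =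
      X 1 * X 0 ^ c * genFun (extension Y w ∩ {x | x.slack = 0}) (lastWeight w c) + genFun Y w := by
  have hinit : genFun (extension Y w ∩ {x | x.slack = 0} ∩ {x | x.b = 0}) (lastWeight w c) =
      genFun Y w := by
    refine (genFun_of_bijOn bijOn_init_of_b_eq_zero_of_slack_eq_zero fun x hx => ?_).symm
    obtain ⟨⟨⟨-, hsl⟩, hs : x.slack = 0⟩, hb : x.b = 0⟩ := hx
    rw [lastWeight, hb, show x.a = w x.init 1 by omega, mul_zero, add_zero, bideg_eta]
  have hshift : genFun ((extension Y w ∩ {x | x.slack = 0}) \ {x | x.b = 0}) (lastWeight w c) =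
      X 1 * X 0 ^ c * genFun (extension Y w ∩ {x | x.slack = 0}) (lastWeight w c) := by
    rw [genFun_eq_monomial_mul_of_bijOn (e := bideg c 1) bijOn_pred_a_pred_b ?_,
      monomial_bideg, pow_one, mul_comm (X 0 ^ c)]
    intro x hx
    simp only [extension, mem_sdiff, mem_inter_iff, mem_ofPred_eq] at hx
    obtain ⟨b, hb⟩ := Nat.exists_eq_add_one_of_ne_zero hx.2
    rw [lastWeight, lastWeight, bideg_add_bideg, bideg_inj]
    dsimp only
    rw [hb, Nat.add_sub_cancel]
    constructor
    · ring
    · omega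
  conv_lhs => rw [← genFun_inter_add_sdiff (finite_lastWeight_fiber hY) {x | x.b = 0}, hinit,
    hshift]
  ring

theorem genFun_extension_step (hc : c ≠ 0) (hY : ∀ d, (Y ∩ w ⁻¹' {d}).Finite) :
    (X 1 - X 0 ^ c) * (1 - X 1 * X 0 ^ c) * (1 - X 0 ^ (2 * c)) *
        genFun (extension Y w) (weight w c) =
      X 1 * (1 - X 0 ^ (2 * c)) * genFun Y w -
        X 0 ^ c * (1 - X 1 * X 0 ^ c) * subst ![X 0, X 0 ^ c] (genFun Y w) := by
  linear_combination (X 1 - X 0 ^ c) * (1 - X 0 ^ (2 * c)) * genFun_extension hc hY +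
    (1 - X 0 ^ (2 * c)) * genFun_b_eq_zero hc hY +
    (X 1 - X 0 ^ c) * X 0 ^ (2 * c) * genFun_slack_eq_zero hc hY -
    X 0 ^ c * (1 - X 1 * X 0 ^ c) * genFun_slack_eq_zero_b_eq_zero hc hY

end Appended

section Solutions

variable {m : ℕ}

def tailSum (a : Fin m → ℕ) (i : Fin m) : ℕ := ∑ t ∈ Finset.univ.filter (fun t => i ≤ t), a t

def weightedSum (a : Fin m → ℕ) : ℕ := ∑ i : Fin m, ((i : ℕ) + 1) * a i

theorem tailSum_snoc_castSucc (a : Fin m → ℕ) (v : ℕ) (j : Fin m) :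
    tailSum (Fin.snoc a v : Fin (m + 1) → ℕ) j.castSucc = tailSum a j + v := by
  simp [tailSum, Finset.sum_filter, Fin.sum_univ_castSucc, Fin.le_last]

theorem tailSum_snoc_last (a : Fin m → ℕ) (v : ℕ) :
    tailSum (Fin.snoc a v : Fin (m + 1) → ℕ) (Fin.last m) = v := by
  simp [tailSum, Finset.sum_filter]

theorem weightedSum_snoc (a : Fin m → ℕ) (v : ℕ) :
    weightedSum (Fin.snoc a v : Fin (m + 1) → ℕ) = weightedSum a + (m + 1) * v := by
  simp [weightedSum, Fin.sum_univ_castSucc]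

theorem le_weightedSum (a : Fin m → ℕ) (i : Fin m) : a i ≤ weightedSum a :=
  (Nat.le_mul_of_pos_left _ i.val.succ_pos).trans
    (Finset.single_le_sum (f := fun i : Fin m => ((i : ℕ) + 1) * a i) (by simp)
      (Finset.mem_univ i))

def sol (m : ℕ) : Set ((Fin m → ℕ) × (Fin m → ℕ) × ℕ) :=
  {x | ∀ i, tailSum x.2.1 i ≤ tailSum x.1 i + x.2.2}

def solWeight (x : (Fin m → ℕ) × (Fin m → ℕ) × ℕ) : Fin 2 →₀ ℕ :=
  bideg (weightedSum x.1 + weightedSum x.2.1) x.2.2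

theorem snoc_mem_sol_iff (a b : Fin m → ℕ) (α β K : ℕ) :
    ((Fin.snoc a α : Fin (m + 1) → ℕ), (Fin.snoc b β : Fin (m + 1) → ℕ), K) ∈ sol (m + 1) ↔
      (a, b, K + α - β) ∈ sol m ∧ β ≤ α + K := by
  simp only [sol, mem_ofPred_eq, Fin.forall_fin_succ', tailSum_snoc_castSucc, tailSum_snoc_last]
  constructor <;> rintro ⟨h, hlast⟩ <;> exact ⟨fun i => by have := h i; omega, by omega⟩

theorem finite_solWeight_fiber (m : ℕ) (d : Fin 2 →₀ ℕ) :
    (sol m ∩ solWeight ⁻¹' {d}).Finite := by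
  refine (finite_Iic ((fun _ => d 0), (fun _ => d 0), d 1)).subset ?_
  rintro ⟨a, b, K⟩ ⟨-, hd⟩
  have hd' : bideg (weightedSum a + weightedSum b) K = d := hd
  obtain ⟨h0, h1⟩ := bideg_eq_iff.1 hd'
  refine ⟨fun i => ?_, fun i => ?_, h1.le⟩
  · have := le_weightedSum a i
    exact (show a i ≤ d 0 by omega)
  · have := le_weightedSum b i
    exact (show b i ≤ d 0 by omega)

def peel (x : (Fin (m + 1) → ℕ) × (Fin (m + 1) → ℕ) × ℕ) :
    Appended ((Fin m → ℕ) × (Fin m → ℕ) × ℕ) :=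
  ⟨(Fin.init x.1, Fin.init x.2.1, x.2.2 + x.1 (Fin.last m) - x.2.1 (Fin.last m)),
    x.1 (Fin.last m), x.2.1 (Fin.last m), x.2.2⟩

def unpeel (z : Appended ((Fin m → ℕ) × (Fin m → ℕ) × ℕ)) :
    (Fin (m + 1) → ℕ) × (Fin (m + 1) → ℕ) × ℕ :=
  (Fin.snoc z.init.1 z.a, Fin.snoc z.init.2.1 z.b, z.slack)

theorem bijOn_peel : BijOn peel (sol (m + 1)) (Appended.extension (sol m) solWeight) := by
  refine InvOn.bijOn (f' := unpeel) ⟨fun x _ => ?_, fun z hz => ?_⟩ (fun x hx => ?_) fun z hz => ?_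
  · simp [peel, unpeel, Fin.snoc_init_self]
  · obtain ⟨-, hz⟩ := hz
    simp only [solWeight, bideg_apply_one] at hz
    simp only [peel, unpeel, Fin.init_snoc, Fin.snoc_last, Appended.ext_iff, Prod.ext_iff,
      and_true, true_and]
    omega
  · obtain ⟨a, b, K⟩ := x
    rw [← Fin.snoc_init_self a, ← Fin.snoc_init_self b, snoc_mem_sol_iff] at hx
    refine ⟨hx.1, ?_⟩
    simp only [peel, solWeight, bideg_apply_one]
    omega
  · obtain ⟨hz, hzK⟩ := hz
    simp only [solWeight, bideg_apply_one] at hzK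
    refine (snoc_mem_sol_iff _ _ _ _ _).2 ⟨?_, by omega⟩
    rwa [show z.slack + z.a - z.b = z.init.2.2 by omega]

theorem weight_peel (x : (Fin (m + 1) → ℕ) × (Fin (m + 1) → ℕ) × ℕ) :
    Appended.weight solWeight (m + 1) (peel x) = solWeight x := by
  obtain ⟨a, b, K⟩ := x
  conv_rhs => rw [← Fin.snoc_init_self a, ← Fin.snoc_init_self b]
  simp only [Appended.weight, peel, solWeight, bideg_apply_zero, weightedSum_snoc]
  congr 1
  ring

end Solutions

def solGenFun (m : ℕ) : MvPowerSeries (Fin 2) ℤ := genFun (sol m) solWeight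

theorem solGenFun_succ (m : ℕ) :
    solGenFun (m + 1) =
      genFun (Appended.extension (sol m) solWeight) (Appended.weight solWeight (m + 1)) :=
  (genFun_of_bijOn bijOn_peel fun x _ => weight_peel x).symm

theorem solGenFun_zero_mul : solGenFun 0 * (1 - X 1) = 1 := by
  have hshift : genFun (sol 0 \ {x | x.2.2 = 0}) solWeight = X 1 * solGenFun 0 := by
    rw [genFun_eq_monomial_mul_of_bijOn (e := bideg 0 1) (f := fun x => (x.1, x.2.1, x.2.2 - 1))
      (t := sol 0) ?_ ?_, monomial_bideg, pow_zero, one_mul, pow_one, solGenFun]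
    · refine InvOn.bijOn (f' := fun x => (x.1, x.2.1, x.2.2 + 1)) ⟨?_, ?_⟩ ?_ ?_ <;>
        intro x hx <;> simp_all [sol, Prod.ext_iff]
      omega
    · rintro ⟨a, b, K⟩ ⟨-, hK : K ≠ 0⟩
      simp only [solWeight, bideg_add_bideg, bideg_inj]
      omega
  have hK : sol 0 ∩ {x | x.2.2 = 0} = {(Fin.elim0, Fin.elim0, 0)} := by
    ext ⟨a, b, K⟩
    simp [sol, Prod.ext_iff, funext_iff]
  have hsplit := genFun_inter_add_sdiff (finite_solWeight_fiber 0) {x | x.2.2 = 0}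
  rw [hK, genFun_singleton, hshift] at hsplit
  simp only [solWeight, weightedSum, Finset.univ_eq_empty, Finset.sum_empty, add_zero,
    monomial_bideg, pow_zero, mul_one] at hsplit
  rw [← solGenFun] at hsplit
  linear_combination (-1 : MvPowerSeries (Fin 2) ℤ) * hsplit

theorem solGenFun_mul (m : ℕ) :
    solGenFun m * ((1 - X 1) * (1 - X 1 * X 0) * (∏ t ∈ Finset.range m, (1 - X 0 ^ (t + 1))) *
      (∏ t ∈ Finset.range m, (1 - X 0 ^ (t + 2)))) = 1 - X 1 * X 0 ^ (m + 1) := by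
  induction m with
  | zero =>
    simp only [Finset.range_zero, Finset.prod_empty, mul_one, zero_add, pow_one]
    linear_combination (1 - X 1 * X 0) * solGenFun_zero_mul
  | succ m ih =>
    have hc : m + 1 ≠ 0 := m.succ_ne_zero
    have hstep := Appended.genFun_extension_step hc (finite_solWeight_fiber m)
    rw [← solGenFun, ← solGenFun_succ] at hstep
    have hsubst := congrArg (substAlgHom (hasSubst_X_X_pow hc)) ih
    simp only [map_mul, map_sub, map_one, map_prod, map_pow, substAlgHom_apply,
      subst_X (hasSubst_X_X_pow hc), Matrix.cons_val_zero, Matrix.cons_val_one] at hsubst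
    have hD : (X 1 - X 0 ^ (m + 1)) * (1 - X 1 * X 0 ^ (m + 1)) * (1 - X 0 ^ (2 * (m + 1))) ≠
        (0 : MvPowerSeries (Fin 2) ℤ) :=
      mul_ne_zero (mul_ne_zero (X_one_sub_X_zero_pow_ne_zero _)
        (one_sub_ne_zero_of_constantCoeff_eq_zero (by simp)))
        (one_sub_ne_zero_of_constantCoeff_eq_zero (by simp))
    apply mul_left_cancel₀ hD
    rw [Finset.prod_range_succ, Finset.prod_range_succ]
    linear_combination
      ((1 - X 1) * (1 - X 1 * X 0) * (∏ t ∈ Finset.range m, (1 - X 0 ^ (t + 1))) *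
        (∏ t ∈ Finset.range m, (1 - X 0 ^ (t + 2))) * (1 - X 0 ^ (m + 1)) *
        (1 - X 0 ^ (m + 2))) * hstep +
      X 1 * (1 - X 0 ^ (2 * (m + 1))) * (1 - X 0 ^ (m + 1)) * (1 - X 0 ^ (m + 2)) * ih -
      X 0 ^ (m + 1) * (1 - X 1 * X 0 ^ (m + 1)) * (1 - X 1) * (1 - X 1 * X 0) * hsubst

theorem sum_filter_eq_weightedSum_init {k : ℕ} (a : Fin (k + 1) → ℕ) :
    ∑ i ∈ Finset.univ.filter (fun i : Fin (k + 1) => (i : ℕ) + 1 < k + 1), ((i : ℕ) + 1) * a i =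
      weightedSum (Fin.init a) := by
  simp [Finset.sum_filter, Fin.sum_univ_castSucc, weightedSum, Fin.init]

theorem Gstar_succ_eq_genFun (k : ℕ) :
    Gstar (k + 1) = genFun {p : (Fin (k + 1) → ℕ) × (Fin (k + 1) → ℕ) | (p.1, p.2, 0) ∈ sol (k + 1)}
      (fun p => bideg (weightedSum (Fin.init p.1) + weightedSum p.2) (p.1 (Fin.last k))) := by
  ext d
  rw [coeff_genFun, ← Nat.card_coe_set_eq]
  refine congrArg Nat.cast (Nat.card_congr (Equiv.subtypeEquivRight fun p => ?_))
  have hlast : (⟨k + 1 - 1, by omega⟩ : Fin (k + 1)) = Fin.last k := Fin.ext (by simp)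
  simp only [hlast, sum_filter_eq_weightedSum_init, sol, tailSum, add_zero, mem_inter_iff,
    mem_ofPred_eq, mem_preimage, mem_singleton_iff, bideg_eq_iff, weightedSum, Nat.zero_lt_succ,
    forall_const]
  tauto

theorem Gstar_succ (k : ℕ) :
    Gstar (k + 1) = genFun (Appended.extension (sol k) solWeight ∩ {x | x.slack = 0})
      (Appended.lastWeight solWeight (k + 1)) := by
  have hpairs : BijOn (fun p => (p.1, p.2, 0))
      {p : (Fin (k + 1) → ℕ) × (Fin (k + 1) → ℕ) | (p.1, p.2, 0) ∈ sol (k + 1)}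
      (sol (k + 1) ∩ {x | x.2.2 = 0}) := by
    refine InvOn.bijOn (f' := fun x => (x.1, x.2.1)) ⟨fun p _ => rfl, ?_⟩ (fun p hp => ⟨hp, rfl⟩) ?_
    · rintro ⟨a, b, K⟩ ⟨-, rfl : K = 0⟩
      rfl
    · rintro ⟨a, b, K⟩ ⟨hx, rfl : K = 0⟩
      exact hx
  have hpeel : BijOn peel (sol (k + 1) ∩ {x | x.2.2 = 0})
      (Appended.extension (sol k) solWeight ∩ {x | x.slack = 0}) :=
    bijOn_peel.inter_mapsTo (fun x hx => hx) fun x hx => hx.2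
  rw [Gstar_succ_eq_genFun]
  refine (genFun_of_bijOn (hpeel.comp hpairs) fun p _ => ?_).symm
  obtain ⟨a, b⟩ := p
  conv_rhs => rw [← Fin.snoc_init_self b]
  simp only [Function.comp_apply, Appended.lastWeight, peel, solWeight, bideg_apply_zero,
    weightedSum_snoc, add_assoc]

/-- `G*ₙ(q,s) = 1/((1−s)(1−sq)(q;q)_{n−1}(q²;q)_{n−1})`, with denominators
cleared. -/
theorem Gstar_closed_form (n : ℕ) (hn : 1 ≤ n) :
    Gstar n * (1 - MvPowerSeries.X (1 : Fin 2)) *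
      (1 - MvPowerSeries.X (1 : Fin 2) * MvPowerSeries.X (0 : Fin 2)) *
      (∏ t ∈ Finset.range (n - 1), (1 - MvPowerSeries.X (0 : Fin 2) ^ (t + 1))) *
      (∏ t ∈ Finset.range (n - 1), (1 - MvPowerSeries.X (0 : Fin 2) ^ (t + 2)))
      = 1 := by
  obtain ⟨k, rfl⟩ := Nat.exists_eq_add_of_le' hn
  have hG := Appended.genFun_lastWeight (c := k + 1) (finite_solWeight_fiber k)
  rw [← Gstar_succ, ← solGenFun] at hG
  have hne : (1 - X 1 * X 0 ^ (k + 1) : MvPowerSeries (Fin 2) ℤ) ≠ 0 :=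
    one_sub_ne_zero_of_constantCoeff_eq_zero (by simp)
  apply mul_left_cancel₀ hne
  rw [Nat.add_sub_cancel]
  linear_combination ((1 - X 1) * (1 - X 1 * X 0) *
    (∏ t ∈ Finset.range k, (1 - X 0 ^ (t + 1))) * (∏ t ∈ Finset.range k, (1 - X 0 ^ (t + 2)))) *
    hG + solGenFun_mul k
end
end

section
/- The generating function Aₙ(q) = Σ_λ q^{|λ|} over anti-lecture hall compositions of length n (nonnegative integer sequences with λ₁/1 ≥ λ₂/2 ≥ ··· ≥ λₙ/n ≥ 0) equals ∏_{i=1}^{n} (1 + qⁱ)/(1 − q^{i+1}). -/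
noncomputable section
open PowerSeries

/-- The number of anti-lecture hall compositions of `N` of length `n`:
nonnegative integer sequences `(λ₁,…,λₙ)` with `λᵢ/i ≥ λ_{i+1}/(i+1)`,
i.e. `(i+1)λᵢ ≥ i·λ_{i+1}`, and `Σλᵢ = N`. -/
def alhcCount (n N : ℕ) : ℕ :=
  Nat.card {f : Fin n → ℕ //
    (∀ i : Fin n, ∀ h : (i : ℕ) + 1 < n,
      ((i : ℕ) + 1) * f ⟨(i : ℕ) + 1, h⟩ ≤ ((i : ℕ) + 2) * f i) ∧
    ∑ i, f i = N}

/-!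
Let `G n k` count anti-lecture hall compositions of length `n` with last part `λₙ ≥ k`. For
`k ≤ n` we have `n k ≤ (n + 1) λₙ ↔ k ≤ λₙ`, so a composition of length `n + 1` with last part
exactly `k` is a composition of length `n` with `λₙ ≥ k` followed by `k`; hence
`G (n+1) k = q^k G n k + G (n+1) (k+1)`. Subtracting the staircase `(1, 2, …, n)` gives
`G n n = q^(1 + ⋯ + n) G n 0`. Telescoping these relations over `k ≤ n + 1` determines
`G (n+1) 0`, since `1 - q^(1 + ⋯ + (n+1))` is not a zero divisor, and then every `G (n+1) k`.
So by induction on `n` it suffices to check that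
`q^(n + (n-1) + ⋯ + (n-k+1)) ∏_{i=1}^{k} (1 + qⁱ) ∏_{i=1}^{n-k} (1 + qⁱ) / ∏_{i=1}^{n} (1 - q^(i+1))`
satisfies the same relations.
-/

namespace AntiLectureHall

open Finset

def IsALHC {n : ℕ} (f : Fin n → ℕ) : Prop :=
  ∀ i : Fin n, ∀ h : (i : ℕ) + 1 < n,
    ((i : ℕ) + 1) * f ⟨(i : ℕ) + 1, h⟩ ≤ ((i : ℕ) + 2) * f i

/-- The last-part condition is vacuous for `n = 0`. -/
def alhcGe (n k : ℕ) : Set (Fin n → ℕ) :=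
  {f | IsALHC f ∧ ∀ i : Fin n, (i : ℕ) + 1 = n → k ≤ f i}

section GenFun

variable {n : ℕ}

def genFun (s : Set (Fin n → ℕ)) : PowerSeries ℤ :=
  PowerSeries.mk fun N => ((s ∩ {f | ∑ i, f i = N}).ncard : ℤ)

lemma finite_setOf_sum_eq (n N : ℕ) : {f : Fin n → ℕ | ∑ i, f i = N}.Finite := by
  convert (Finset.Nat.antidiagonalTuple n N).finite_toSet
  ext f
  simp [Finset.Nat.mem_antidiagonalTuple]

lemma genFun_eq_inter_add_diff (s t : Set (Fin n → ℕ)) :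
    genFun s = genFun (s ∩ t) + genFun (s \ t) := by
  ext N
  simp only [genFun, coeff_mk, map_add]
  rw [← Nat.cast_add, ← Set.ncard_inter_add_ncard_sdiff_eq_ncard (s ∩ _) t
    ((finite_setOf_sum_eq n N).inter_of_right s), Set.inter_right_comm,
    Set.inter_sdiff_right_comm]

lemma genFun_image {m : ℕ} {φ : (Fin m → ℕ) → Fin n → ℕ} (hφ : Function.Injective φ) {c : ℕ}
    (hsum : ∀ g, ∑ i, φ g i = ∑ i, g i + c) (t : Set (Fin m → ℕ)) :
    genFun (φ '' t) = X ^ c * genFun t := by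
  ext N
  have hpre : φ ⁻¹' {f | ∑ i, f i = N} = {g | ∑ i, g i + c = N} := by
    ext g
    simp [hsum]
  rw [coeff_X_pow_mul']
  simp only [genFun, coeff_mk]
  rw [← Set.image_inter_preimage, Set.ncard_image_of_injective _ hφ, hpre]
  split_ifs with hc
  · congr 3
    ext g
    simp only [Set.mem_ofPred_eq]
    omega
  · rw [Set.eq_empty_of_forall_notMem (s := {g | _}) (fun g hg => by simp at hg; omega)]
    simp

lemma genFun_univ_fin_zero : genFun (Set.univ : Set (Fin 0 → ℕ)) = 1 := by
  ext N
  simp only [genFun, coeff_mk, coeff_one, Set.univ_inter, univ_eq_empty, sum_empty]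
  split_ifs with h
  · simp [h]
  · simp [Ne.symm h]

end GenFun

section Combinatorics

variable {n k : ℕ}

lemma mul_le_succ_mul_iff {m : ℕ} (hk : k ≤ n) : n * k ≤ (n + 1) * m ↔ k ≤ m := by
  constructor
  · intro h
    by_contra! hm
    nlinarith
  · intro h
    nlinarith

lemma mem_alhcGe_succ {f : Fin (n + 1) → ℕ} :
    f ∈ alhcGe (n + 1) k ↔ IsALHC f ∧ k ≤ f (Fin.last n) := by
  refine and_congr_right fun _ => ⟨fun h => h _ rfl, fun h i hi => ?_⟩
  rwa [show i = Fin.last n from Fin.ext (by simpa using hi)]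

lemma alhcGe_zero : alhcGe n 0 = {f | IsALHC f} := by
  ext f
  simp [alhcGe]

lemma isALHC_snoc_iff {g : Fin n → ℕ} {a : ℕ} :
    IsALHC (Fin.snoc g a : Fin (n + 1) → ℕ) ↔
      IsALHC g ∧ ∀ i : Fin n, (i : ℕ) + 1 = n → n * a ≤ (n + 1) * g i := by
  constructor
  · intro h
    refine ⟨fun i hi => ?_, fun i hi => ?_⟩
    · simpa [Fin.snoc, hi] using h i.castSucc (by simp)
    · convert h i.castSucc (by simp) using 2 <;> simp [Fin.snoc, hi]
  · rintro ⟨hg, hlast⟩ i hi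
    rcases Nat.lt_or_ge ((i : ℕ) + 1) n with hlt | hge
    · simpa [Fin.snoc, Fin.castLT, hlt, show (i : ℕ) < n by omega] using hg ⟨i, by omega⟩ hlt
    · have := hlast ⟨i, by omega⟩ (by simp; omega)
      simp [Fin.snoc, Fin.castLT, show (i : ℕ) < n by omega, show ¬ (i : ℕ) + 1 < n by omega]
      rwa [show (i : ℕ) + 1 = n by omega, show (i : ℕ) + 2 = n + 1 by omega]

lemma snoc_mem_alhcGe_iff (hk : k ≤ n) {g : Fin n → ℕ} :
    (Fin.snoc g k : Fin (n + 1) → ℕ) ∈ alhcGe (n + 1) k ↔ g ∈ alhcGe n k := by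
  rw [mem_alhcGe_succ, isALHC_snoc_iff, Fin.snoc_last]
  simp only [le_refl, and_true, alhcGe, Set.mem_ofPred_eq, mul_le_succ_mul_iff hk]

lemma alhcGe_inter_last_eq (hk : k ≤ n) :
    alhcGe (n + 1) k ∩ {f | f (Fin.last n) = k} = (Fin.snoc · k) '' alhcGe n k := by
  ext f
  constructor
  · rintro ⟨hf, hlast : f (Fin.last n) = k⟩
    have hsnoc : Fin.snoc (Fin.init f) k = f := hlast ▸ Fin.snoc_init_self f
    exact ⟨Fin.init f, (snoc_mem_alhcGe_iff hk).1 (by rwa [hsnoc]), hsnoc⟩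
  · rintro ⟨g, hg, rfl⟩
    exact ⟨(snoc_mem_alhcGe_iff hk).2 hg, Fin.snoc_last _ _⟩

lemma alhcGe_diff_last_eq :
    alhcGe (n + 1) k \ {f | f (Fin.last n) = k} = alhcGe (n + 1) (k + 1) := by
  ext f
  simp only [Set.mem_sdiff, mem_alhcGe_succ, Set.mem_ofPred_eq]
  exact ⟨fun ⟨⟨hf, hk⟩, hne⟩ => ⟨hf, by omega⟩, fun ⟨hf, hk⟩ => ⟨⟨hf, by omega⟩, by omega⟩⟩

lemma genFun_alhcGe_succ (hk : k ≤ n) :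
    genFun (alhcGe (n + 1) k) =
      X ^ k * genFun (alhcGe n k) + genFun (alhcGe (n + 1) (k + 1)) := by
  rw [genFun_eq_inter_add_diff _ {f | f (Fin.last n) = k}, alhcGe_inter_last_eq hk,
    alhcGe_diff_last_eq, genFun_image (Fin.snoc_left_injective (α := fun _ => ℕ) k)]
  intro g
  simp [Fin.sum_univ_castSucc]

lemma isALHC_add_staircase_iff {g : Fin n → ℕ} :
    IsALHC (fun i => g i + ((i : ℕ) + 1)) ↔ IsALHC g := by
  refine forall₂_congr fun i h => ?_
  constructor <;> intro h' <;> linarith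

lemma le_of_mem_alhcGe_self {f : Fin n → ℕ} (hf : f ∈ alhcGe n n) (i : Fin n) :
    (i : ℕ) + 1 ≤ f i := by
  obtain ⟨d, hd⟩ : ∃ d, (i : ℕ) + 1 + d = n := ⟨n - (i + 1), by omega⟩
  induction d generalizing i with
  | zero => simpa [hd] using hf.2 i hd
  | succ d ih =>
    have hlt : (i : ℕ) + 1 < n := by omega
    have hnext := ih ⟨i + 1, hlt⟩ (by simp; omega)
    have hstep := hf.1 i hlt
    dsimp only at hnext
    nlinarith

lemma alhcGe_self_eq_image :
    alhcGe n n =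
      (fun (g : Fin n → ℕ) (i : Fin n) => g i + ((i : ℕ) + 1)) '' {g | IsALHC g} := by
  ext f
  constructor
  · intro hf
    have hsub : (fun i => f i - ((i : ℕ) + 1) + ((i : ℕ) + 1)) = f :=
      funext fun i => Nat.sub_add_cancel (le_of_mem_alhcGe_self hf i)
    refine ⟨fun i => f i - ((i : ℕ) + 1), ?_, hsub⟩
    rw [Set.mem_ofPred_eq, ← isALHC_add_staircase_iff, hsub]
    exact hf.1
  · rintro ⟨g, hg, rfl⟩
    exact ⟨isALHC_add_staircase_iff.2 hg, fun i hi => by dsimp only; omega⟩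

lemma genFun_alhcGe_self :
    genFun (alhcGe n n) =
      X ^ (∑ i ∈ range n, (i + 1)) * genFun {g : Fin n → ℕ | IsALHC g} := by
  rw [alhcGe_self_eq_image, genFun_image]
  · intro g g' h
    funext i
    simpa using congrFun h i
  · intro g
    rw [sum_add_distrib, Fin.sum_univ_eq_sum_range (fun i => i + 1)]

lemma genFun_alhcGe_zero_zero : genFun (alhcGe 0 0) = 1 := by
  rw [← genFun_univ_fin_zero]
  congr
  ext f
  simp [alhcGe, IsALHC]

lemma genFun_setOf_isALHC :
    genFun {g : Fin n → ℕ | IsALHC g} = mk fun N => (alhcCount n N : ℤ) :=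
  rfl

end Combinatorics

section ClosedForm

lemma eq_of_sub_succ_eq {R : Type*} [CommRing R] [IsDomain R] {g h : ℕ → R} {u : R}
    (hu : u ≠ 1) {n : ℕ} (hstep : ∀ k < n, g k - g (k + 1) = h k - h (k + 1))
    (hg : g n = u * g 0) (hh : h n = u * h 0) {k : ℕ} (hk : k ≤ n) : g k = h k := by
  have htele : ∀ m ≤ n, g 0 - g m = h 0 - h m := fun m hm => by
    rw [← sum_range_sub', ← sum_range_sub']
    exact sum_congr rfl fun j hj => hstep j (by simp at hj; omega)
  have h0 : (1 - u) * g 0 = (1 - u) * h 0 := by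
    linear_combination htele n le_rfl + hg - hh
  linear_combination mul_left_cancel₀ (sub_ne_zero.2 hu.symm) h0 - htele k hk

lemma X_pow_ne_one {R : Type*} [Semiring R] [Nontrivial R] {m : ℕ} (hm : m ≠ 0) :
    (X : PowerSeries R) ^ m ≠ 1 := fun h => by
  simpa [coeff_X_pow, hm.symm] using congrArg (coeff 0) h

def numer (m : ℕ) : PowerSeries ℤ := ∏ i ∈ range m, (1 + X ^ (i + 1))

def denom (m : ℕ) : PowerSeries ℤ := ∏ i ∈ range m, (1 - X ^ (i + 2))

def closedForm (n k : ℕ) : PowerSeries ℤ :=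
  X ^ (∑ j ∈ range k, (n - j)) * numer k * numer (n - k)

lemma closedForm_sub_closedForm_succ {n k : ℕ} (hk : k ≤ n) :
    closedForm (n + 1) k - closedForm (n + 1) (k + 1) =
      X ^ k * (1 - X ^ (n + 2)) * closedForm n k := by
  obtain ⟨d, rfl⟩ := Nat.exists_eq_add_of_le hk
  set e := ∑ j ∈ range k, (k + d - j)
  have h1 : ∑ j ∈ range k, (k + d + 1 - j) = e + k := by
    rw [sum_congr rfl fun j hj => show k + d + 1 - j = k + d - j + 1 by simp at hj; omega,
      sum_add_distrib]
    simp [e]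
  have h2 : ∑ j ∈ range (k + 1), (k + d + 1 - j) = e + k + (d + 1) := by
    rw [sum_range_succ, h1]
    omega
  simp only [closedForm, h1, h2, show k + d + 1 - k = d + 1 by omega,
    show k + d + 1 - (k + 1) = d by omega, show k + d - k = d by omega, numer, prod_range_succ,
    pow_add]
  ring

lemma closedForm_self (n : ℕ) :
    closedForm n n = X ^ (∑ i ∈ range n, (i + 1)) * closedForm n 0 := by
  have : ∑ j ∈ range n, (n - j) = ∑ i ∈ range n, (i + 1) := by
    rw [← sum_range_reflect]
    exact sum_congr rfl fun j hj => by simp at hj; omega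
  simp [closedForm, this, numer, mul_comm]

theorem genFun_alhcGe_mul_denom (n : ℕ) :
    ∀ k ≤ n, genFun (alhcGe n k) * denom n = closedForm n k := by
  induction n with
  | zero =>
    intro k hk
    obtain rfl := Nat.le_zero.1 hk
    simp [genFun_alhcGe_zero_zero, closedForm, numer, denom]
  | succ n ih =>
    intro k hk
    have hu : (X : PowerSeries ℤ) ^ (∑ i ∈ range (n + 1), (i + 1)) ≠ 1 :=
      X_pow_ne_one (by rw [sum_range_succ]; omega)
    refine eq_of_sub_succ_eq (g := fun k => genFun (alhcGe (n + 1) k) * denom (n + 1)) hu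
      (fun j hj => ?_) ?_ (closedForm_self (n + 1)) hk
    · rw [genFun_alhcGe_succ (by omega), closedForm_sub_closedForm_succ (by omega),
        ← ih j (by omega), denom, prod_range_succ, ← denom]
      ring
    · rw [genFun_alhcGe_self, alhcGe_zero, mul_assoc]

end ClosedForm

end AntiLectureHall

/-- `Aₙ(q) = ∏_{i=1}^{n} (1+qⁱ)/(1−q^{i+1})`, with denominators cleared. -/
theorem alhc_generating_function (n : ℕ) :
    PowerSeries.mk (fun N => (alhcCount n N : ℤ)) *
      (∏ i ∈ Finset.range n, (1 - (X : PowerSeries ℤ) ^ (i + 2))) =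
    ∏ i ∈ Finset.range n, (1 + (X : PowerSeries ℤ) ^ (i + 1)) := by
  simpa [AntiLectureHall.alhcGe_zero, AntiLectureHall.genFun_setOf_isALHC,
    AntiLectureHall.closedForm, AntiLectureHall.numer, AntiLectureHall.denom] using
    AntiLectureHall.genFun_alhcGe_mul_denom n 0 (Nat.zero_le n)
end
end

section
/- The full generating function Bₙ of the system λ₁/1 ≥ λ₂/2 ≥ ··· ≥ λ_{n−1}/(n−1) ≥ λₙ/1 ≥ 0 satisfies Bₙ(x₁,...,xₙ) = A_{n−1}(x₁,...,x_{n−1})/(1 − x₁x₂²x₃³···x_{n−1}^{n−1}xₙ), where A_{n−1} is the full generating function of anti-lecture hall compositions of length n−1. -/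
noncomputable section
open Classical

/-- The full generating function `Bₙ` (with `n = m+2`) of the system
`λ₁/1 ≥ λ₂/2 ≥ ⋯ ≥ λ_{n−1}/(n−1) ≥ λₙ/1 ≥ 0`, i.e. `(i+1)λᵢ ≥ i·λ_{i+1}` for
`1 ≤ i ≤ n−2` together with `λ_{n−1} ≥ (n−1)·λₙ`. -/
def BGF (m : ℕ) : MvPowerSeries (Fin (m + 2)) ℤ :=
  fun d => if (∀ i : Fin (m + 2), ∀ h : (i : ℕ) + 1 < m + 1,
      ((i : ℕ) + 1) * d ⟨(i : ℕ) + 1, by omega⟩ ≤ ((i : ℕ) + 2) * d i) ∧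
      (m + 1) * d (Fin.last (m + 1)) ≤ d ⟨m, by omega⟩
    then 1 else 0

/-- `A_{n−1}(x₁,…,x_{n−1})`, the full generating function of anti-lecture hall
compositions of length `n−1 = m+1`, viewed in the `n`-variable power series
ring (coefficient nonzero only when the last exponent vanishes). -/
def AGFemb (m : ℕ) : MvPowerSeries (Fin (m + 2)) ℤ :=
  fun d => if (∀ i : Fin (m + 2), ∀ h : (i : ℕ) + 1 < m + 1,
      ((i : ℕ) + 1) * d ⟨(i : ℕ) + 1, by omega⟩ ≤ ((i : ℕ) + 2) * d i) ∧
      d (Fin.last (m + 1)) = 0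
    then 1 else 0

/-! Let `r = (1, 2, …, n−1, 1)` be the exponent of the denominator. Subtracting `r` from a
solution of the `B`-system lowers every ratio `λᵢ/i` (`i < n`) and `λₙ` by one, so it preserves
the system; and a solution with `λₙ ≥ 1` dominates `r`, since
`λᵢ/i ≥ λ_{n−1}/(n−1) ≥ λₙ ≥ 1`. Hence the solutions with `λₙ ≥ 1` are exactly `r` plus a
solution, while those with `λₙ = 0` are the anti-lecture hall compositions: `B = A + x^r B`. -/

open MvPowerSeries

theorem MvPowerSeries.prod_X_pow_eq_monomial {σ R : Type*} [Fintype σ] [CommSemiring R]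
    (f : σ →₀ ℕ) : ∏ k, (X k : MvPowerSeries σ R) ^ f k = monomial f 1 := by
  classical
  simp_rw [X_pow_eq, prod_monomial, Finset.prod_const_one, Finsupp.univ_sum_single]

theorem Nat.mul_sub_le_mul_sub_iff {a b p q : ℕ} (ha : q ≤ a) (hb : p ≤ b) :
    p * (a - q) ≤ q * (b - p) ↔ p * a ≤ q * b := by
  zify [ha, hb]
  constructor <;> intro h <;> linarith

theorem Nat.succ_mul_le_of_ratio_antitone {f : ℕ → ℕ} {n c : ℕ}
    (hf : ∀ k < n, (k + 1) * f (k + 1) ≤ (k + 2) * f k) (hn : (n + 1) * c ≤ f n)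
    {j : ℕ} (hj : j ≤ n) : (j + 1) * c ≤ f j := by
  refine Nat.decreasingInduction (motive := fun j _ => (j + 1) * c ≤ f j) (fun k hk ih => ?_) hn hj
  have : (k + 2) * ((k + 1) * c) ≤ (k + 2) * f k := by nlinarith [hf k hk]
  exact Nat.le_of_mul_le_mul_left this (by omega)

section

variable {m : ℕ}

def IsAntiLectureHall (m : ℕ) (d : Fin (m + 2) →₀ ℕ) : Prop :=
  ∀ i : Fin (m + 2), ∀ h : (i : ℕ) + 1 < m + 1,
    ((i : ℕ) + 1) * d ⟨(i : ℕ) + 1, by omega⟩ ≤ ((i : ℕ) + 2) * d i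

def IsBSolution (m : ℕ) (d : Fin (m + 2) →₀ ℕ) : Prop :=
  IsAntiLectureHall m d ∧ (m + 1) * d (Fin.last (m + 1)) ≤ d ⟨m, by omega⟩

/-- The exponent `r` of `x₁x₂²⋯x_{n−1}^{n−1}xₙ`. -/
def bRay (m : ℕ) : Fin (m + 2) →₀ ℕ :=
  Finsupp.equivFunOnFinite.symm fun k => if k = Fin.last (m + 1) then 1 else (k : ℕ) + 1

theorem bRay_apply (k : Fin (m + 2)) :
    bRay m k = if k = Fin.last (m + 1) then 1 else (k : ℕ) + 1 := rfl

@[simp]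
theorem bRay_last : bRay m (Fin.last (m + 1)) = 1 := if_pos rfl

theorem bRay_apply_of_lt {k : Fin (m + 2)} (hk : (k : ℕ) < m + 1) : bRay m k = k + 1 := by
  rw [bRay_apply, if_neg (Fin.ne_of_lt hk)]

theorem coeff_BGF (d : Fin (m + 2) →₀ ℕ) :
    coeff d (BGF m) = if IsBSolution m d then 1 else 0 :=
  if_congr Iff.rfl rfl rfl

theorem coeff_AGFemb (d : Fin (m + 2) →₀ ℕ) :
    coeff d (AGFemb m) = if IsAntiLectureHall m d ∧ d (Fin.last (m + 1)) = 0 then 1 else 0 :=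
  if_congr Iff.rfl rfl rfl

open Fin.NatCast in
theorem bRay_le_of_isBSolution {d : Fin (m + 2) →₀ ℕ} (hd : IsBSolution m d)
    (hlast : d (Fin.last (m + 1)) ≠ 0) : bRay m ≤ d := by
  obtain ⟨hchain, hend⟩ := hd
  have hratio : ∀ j ≤ m, (j + 1) * d (Fin.last (m + 1)) ≤ d (j : Fin (m + 2)) := fun j hj =>
    Nat.succ_mul_le_of_ratio_antitone (f := fun j => d (j : Fin (m + 2)))
      (fun k hk => by
        simpa only [Fin.natCast_eq_mk (show k < m + 2 by omega),
          Fin.natCast_eq_mk (show k + 1 < m + 2 by omega)] using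
          hchain ⟨k, by omega⟩ (by simpa using hk))
      (by simpa only [Fin.natCast_eq_mk (show m < m + 2 by omega)] using hend) hj
  intro k
  by_cases hk : k = Fin.last (m + 1)
  · rw [hk, bRay_last]
    omega
  · have hkm : (k : ℕ) < m + 1 := Fin.val_lt_last hk
    have := hratio k (by omega)
    rw [Fin.cast_val_eq_self] at this
    rw [bRay_apply_of_lt hkm]
    nlinarith [Nat.one_le_iff_ne_zero.mpr hlast]

theorem isAntiLectureHall_tsub_bRay_iff {d : Fin (m + 2) →₀ ℕ} (h : bRay m ≤ d) :
    IsAntiLectureHall m (d - bRay m) ↔ IsAntiLectureHall m d := by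
  refine forall₂_congr fun i hi => ?_
  have hnext : bRay m ⟨i + 1, by omega⟩ = i + 2 := bRay_apply_of_lt hi
  have hcur : bRay m i = i + 1 := bRay_apply_of_lt (by omega)
  simp only [Finsupp.coe_tsub, Pi.sub_apply, hnext, hcur]
  exact Nat.mul_sub_le_mul_sub_iff (hnext ▸ h _) (hcur ▸ h i)

theorem isBSolution_tsub_bRay_iff {d : Fin (m + 2) →₀ ℕ} (h : bRay m ≤ d) :
    IsBSolution m (d - bRay m) ↔ IsBSolution m d := by
  refine and_congr (isAntiLectureHall_tsub_bRay_iff h) ?_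
  have hpen : bRay m ⟨m, by omega⟩ = m + 1 := bRay_apply_of_lt (by simp)
  have hlast_le : 1 ≤ d (Fin.last (m + 1)) := by simpa using h (Fin.last (m + 1))
  have hpen_le : m + 1 ≤ d ⟨m, by omega⟩ := hpen ▸ h _
  simp only [Finsupp.coe_tsub, Pi.sub_apply, bRay_last, hpen]
  simpa only [Nat.one_mul] using Nat.mul_sub_le_mul_sub_iff hlast_le hpen_le

theorem isBSolution_iff_of_last_ne_zero {d : Fin (m + 2) →₀ ℕ}
    (hlast : d (Fin.last (m + 1)) ≠ 0) :
    IsBSolution m d ↔ bRay m ≤ d ∧ IsBSolution m (d - bRay m) := by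
  refine ⟨fun hd => ?_, fun ⟨hle, hd⟩ => (isBSolution_tsub_bRay_iff hle).1 hd⟩
  have hle := bRay_le_of_isBSolution hd hlast
  exact ⟨hle, (isBSolution_tsub_bRay_iff hle).2 hd⟩

end

/-- `Bₙ(x₁,…,xₙ) = A_{n−1}(x₁,…,x_{n−1}) / (1 − x₁x₂²x₃³⋯x_{n−1}^{n−1}xₙ)`,
with the denominator cleared. -/
theorem BGF_eq (m : ℕ) :
    BGF m * (1 - ∏ k : Fin (m + 2),
      MvPowerSeries.X k ^ (if k = Fin.last (m + 1) then 1 else (k : ℕ) + 1)) =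
    AGFemb m := by
  simp_rw [← bRay_apply, prod_X_pow_eq_monomial, mul_sub, mul_one]
  ext d
  rw [map_sub, coeff_mul_monomial, mul_one, coeff_AGFemb, coeff_BGF, coeff_BGF]
  by_cases hlast : d (Fin.last (m + 1)) = 0
  · have hnle : ¬ bRay m ≤ d := fun h => by simpa [hlast] using h (Fin.last (m + 1))
    simp [IsBSolution, hnle, hlast]
  · by_cases hle : bRay m ≤ d <;> simp [isBSolution_iff_of_last_ne_zero hlast, hlast, hle]
end
end

section
/- For every nonnegative integer n, Σ_{j=0}^{n} (−1)^j (−1;q)_j [n choose j]_q = (−1)^n, where (−1;q)_j = (1+1)(1+q)···(1+q^{j−1}) and [n choose j]_q is the Gaussian binomial coefficient. -/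
noncomputable section

/-- The q-Pochhammer symbol `(a;q)_j = ∏_{t=0}^{j−1}(1 − a q^t)` in the field
of rational functions `ℚ(q)`. -/
def qPoch (a : RatFunc ℚ) (j : ℕ) : RatFunc ℚ :=
  ∏ t ∈ Finset.range j, (1 - a * RatFunc.X ^ t)

/-- The Gaussian binomial coefficient
`[n choose j]_q = (q;q)ₙ / ((q;q)_j (q;q)_{n−j})`. -/
def gaussBinom (n j : ℕ) : RatFunc ℚ :=
  qPoch RatFunc.X n / (qPoch RatFunc.X j * qPoch RatFunc.X (n - j))

/-! With `f j = (-1)^j (-1;q)_j` one has `f (j+1) = -(1 + q^j) f j`, i.e. `q^j f j + f (j+1) = -f j`.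
The q-Pascal rule `[n+1, j] = q^j [n, j] + [n, j-1]` rewrites `∑ f j [n+1, j]` as
`∑ (q^j f j + f (j+1)) [n, j]`, which is therefore minus the row-`n` sum; induct on `n`. -/

open Finset
open RatFunc (X)

lemma qPoch_zero (a : RatFunc ℚ) : qPoch a 0 = 1 := prod_range_zero _

lemma qPoch_succ (a : RatFunc ℚ) (j : ℕ) :
    qPoch a (j + 1) = qPoch a j * (1 - a * X ^ j) :=
  prod_range_succ _ _

lemma qPoch_X_ne_zero (m : ℕ) : qPoch X m ≠ 0 := by
  refine prod_ne_zero_iff.mpr fun t _ => ?_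
  have hpoly : (1 - Polynomial.X ^ (t + 1) : Polynomial ℚ) ≠ 0 := fun h => by
    simpa using congrArg (Polynomial.eval 0) h
  simpa [pow_succ'] using RatFunc.algebraMap_ne_zero hpoly

lemma gaussBinom_zero_right (n : ℕ) : gaussBinom n 0 = 1 := by
  rw [gaussBinom, qPoch_zero, one_mul, Nat.sub_zero, div_self (qPoch_X_ne_zero n)]

lemma gaussBinom_self (n : ℕ) : gaussBinom n n = 1 := by
  rw [gaussBinom, Nat.sub_self, qPoch_zero, mul_one, div_self (qPoch_X_ne_zero n)]

/-- Fails for `i = n`: `gaussBinom n (n + 1)` is not `0`. -/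
lemma gaussBinom_succ_succ {n i : ℕ} (h : i < n) :
    gaussBinom (n + 1) (i + 1) = X ^ (i + 1) * gaussBinom n (i + 1) + gaussBinom n i := by
  obtain ⟨k, rfl⟩ := Nat.exists_eq_add_of_lt h
  have hsub₁ : i + k + 1 + 1 - (i + 1) = k + 1 := by omega
  have hsub₂ : i + k + 1 - (i + 1) = k := by omega
  have hsub₃ : i + k + 1 - i = k + 1 := by omega
  have hfactor (m : ℕ) : (1 - X * X ^ m : RatFunc ℚ) ≠ 0 :=
    right_ne_zero_of_mul (qPoch_succ X m ▸ qPoch_X_ne_zero (m + 1))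
  have hPi := qPoch_X_ne_zero i
  have hPk := qPoch_X_ne_zero k
  have hfi := hfactor i
  have hfk := hfactor k
  simp only [gaussBinom, hsub₁, hsub₂, hsub₃, qPoch_succ X (i + k + 1), qPoch_succ X (i + k),
    qPoch_succ X i, qPoch_succ X k]
  field_simp
  ring

lemma sum_mul_gaussBinom_succ (f : ℕ → RatFunc ℚ) (n : ℕ) :
    ∑ j ∈ range (n + 2), f j * gaussBinom (n + 1) j =
      ∑ j ∈ range (n + 1), (X ^ j * f j + f (j + 1)) * gaussBinom n j := by
  have hpascal : ∀ i ∈ range n, f (i + 1) * gaussBinom (n + 1) (i + 1) =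
      X ^ (i + 1) * f (i + 1) * gaussBinom n (i + 1) + f (i + 1) * gaussBinom n i := by
    intro i hi
    rw [gaussBinom_succ_succ (mem_range.mp hi)]
    ring
  simp only [add_mul, sum_add_distrib]
  rw [sum_range_succ', sum_range_succ, sum_congr rfl hpascal, sum_add_distrib,
    sum_range_succ' (fun j => X ^ j * f j * gaussBinom n j),
    sum_range_succ (fun j => f (j + 1) * gaussBinom n j)]
  simp only [gaussBinom_zero_right, gaussBinom_self]
  ring

lemma neg_one_pow_mul_qPoch_neg_one_succ (j : ℕ) :
    (-1 : RatFunc ℚ) ^ (j + 1) * qPoch (-1) (j + 1) =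
      -(1 + X ^ j) * ((-1) ^ j * qPoch (-1) j) := by
  rw [qPoch_succ, pow_succ]
  ring

/-- `Σ_{j=0}^{n} (−1)^j (−1;q)_j [n choose j]_q = (−1)^n`. -/
theorem alternating_qbinom_sum (n : ℕ) :
    ∑ j ∈ Finset.range (n + 1),
      (-1 : RatFunc ℚ) ^ j * qPoch (-1) j * gaussBinom n j = (-1) ^ n := by
  induction n with
  | zero => simp [qPoch_zero, gaussBinom_zero_right]
  | succ n ih =>
    rw [sum_mul_gaussBinom_succ (fun j => (-1) ^ j * qPoch (-1) j)]
    calc ∑ j ∈ range (n + 1), (X ^ j * ((-1) ^ j * qPoch (-1) j) +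
          (-1) ^ (j + 1) * qPoch (-1) (j + 1)) * gaussBinom n j
        = -∑ j ∈ range (n + 1), (-1) ^ j * qPoch (-1) j * gaussBinom n j := by
          rw [← sum_neg_distrib]
          refine sum_congr rfl fun j _ => ?_
          rw [neg_one_pow_mul_qPoch_neg_one_succ]
          ring
      _ = (-1) ^ (n + 1) := by rw [ih, pow_succ, mul_neg_one]
end
end

section
/- For any finite system of homogeneous linear inequalities with integer coefficients in n variables, the full generating function of its set of nonnegative integer solutions is a rational function of the form p(x₁,...,xₙ)/((1−α₁)(1−α₂)···(1−α_t)), where p is a polynomial with integer coefficients and each αᵢ is a monomial in x₁,...,xₙ. -/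
/-!
The solutions form a submonoid of `ℕⁿ` which is finitely generated (Gordan's lemma): it is the
projection of the equalizer `{(λ, s) : Cλ = s}` in `ℕⁿ × ℕʳ`, and equalizers in a
well-quasi-ordered monoid are finitely generated. Choose nonzero generators `α₁, …, α_t` and
let `Φ : ℕᵗ → ℕⁿ`, `a ↦ ∑ aᵢ αᵢ`. Every solution has a lexicographically least preimage under
`Φ`, and these least preimages form a lower set `L ⊆ ℕᵗ`. Substituting `xᵅⁱ` for `yᵢ` sends the
indicator series of `L` to the generating function of the solutions and `1 - yᵢ` to
`1 - xᵅⁱ`. By Dickson's lemma the complement of `L` is generated by finitely many monomials,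
so by inclusion–exclusion the indicator series of `L` is a polynomial divided by
`∏ (1 - yᵢ)`.
-/

noncomputable section
open Classical

/-- The full generating function of the set of nonnegative integer solutions
of the homogeneous system of linear inequalities `∑_j c i j · λ_j ≥ 0`
(`i = 1,…,r`) given by the rows of an integer matrix `c`. -/
def solGF (r n : ℕ) (c : Fin r → Fin n → ℤ) : MvPowerSeries (Fin n) ℤ :=
  fun d => if ∀ i, 0 ≤ ∑ j, c i j * (d j : ℤ) then 1 else 0

open MvPowerSeries

section UpperClosure

variable {α : Type*}

theorem Ici_inter_upperClosure [SemilatticeSup α] [DecidableEq α] (v : α) (G : Finset α) :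
    Set.Ici v ∩ ↑(upperClosure (G : Set α)) = ↑(upperClosure (G.image (v ⊔ ·) : Set α)) := by
  ext d
  simp [mem_upperClosure, sup_le_iff, and_left_comm]

theorem coe_upperClosure_insert [Preorder α] [DecidableEq α] (v : α) (G : Finset α) :
    (↑(upperClosure (↑(insert v G) : Set α)) : Set α) =
      Set.Ici v ∪ ↑(upperClosure (G : Set α)) := by
  ext d
  simp [mem_upperClosure]

theorem IsUpperSet.exists_finset_eq_upperClosure [PartialOrder α] [WellQuasiOrderedLE α]
    {U : Set α} (hU : IsUpperSet U) : ∃ G : Finset α, U = ↑(upperClosure (G : Set α)) := by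
  have hfin : {x | Minimal (· ∈ U) x}.Finite :=
    WellQuasiOrderedLE.finite_of_isAntichain (setOfPred_minimal_antichain _)
  refine ⟨hfin.toFinset, ?_⟩
  ext x
  simp only [SetLike.mem_coe, mem_upperClosure, Set.Finite.coe_toFinset, Set.mem_ofPred_eq]
  constructor
  · intro hx
    obtain ⟨m, hmx, hm⟩ := (Set.isPWO_of_wellQuasiOrderedLE U).exists_le_minimal hx
    exact ⟨m, hm, hmx⟩
  · rintro ⟨m, hm, hmx⟩
    exact hU hmx hm.prop

end UpperClosure

namespace MvPowerSeries

variable {σ R : Type*} [CommRing R]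

def indicator (A : Set (σ →₀ ℕ)) : MvPowerSeries σ R := fun d => if d ∈ A then 1 else 0

theorem coeff_indicator (A : Set (σ →₀ ℕ)) (d : σ →₀ ℕ) :
    coeff d (indicator A : MvPowerSeries σ R) = if d ∈ A then 1 else 0 := rfl

theorem indicator_empty : (indicator ∅ : MvPowerSeries σ R) = 0 := by
  ext d
  simp [coeff_indicator]

theorem indicator_union (A B : Set (σ →₀ ℕ)) :
    (indicator (A ∪ B) : MvPowerSeries σ R) = indicator A + indicator B - indicator (A ∩ B) := by
  ext d
  simp only [map_sub, map_add, coeff_indicator, Set.mem_union, Set.mem_inter_iff]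
  split_ifs <;> simp_all

theorem indicator_compl (A : Set (σ →₀ ℕ)) :
    (indicator Aᶜ : MvPowerSeries σ R) = indicator Set.univ - indicator A := by
  ext d
  simp only [map_sub, coeff_indicator, Set.mem_compl_iff, Set.mem_univ]
  split_ifs <;> simp_all

theorem indicator_Ici (v : σ →₀ ℕ) :
    (indicator (Set.Ici v) : MvPowerSeries σ R) = monomial v 1 * indicator Set.univ := by
  ext d
  rw [coeff_monomial_mul, coeff_indicator, coeff_indicator]
  simp [Set.mem_Ici]

theorem indicator_singleton_zero : (indicator {0} : MvPowerSeries σ R) = 1 := by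
  ext d
  simp [coeff_indicator, coeff_one]

theorem indicator_mul_one_sub_X {A : Set (σ →₀ ℕ)} {j : σ}
    (hA : ∀ d, d + Finsupp.single j 1 ∈ A ↔ d ∈ A) :
    (indicator A : MvPowerSeries σ R) * (1 - X j) = indicator (A ∩ {d | d j = 0}) := by
  ext d
  simp only [mul_one_sub, map_sub, X, coeff_mul_monomial, coeff_indicator, mul_one,
    Set.mem_inter_iff, Set.mem_ofPred_eq]
  by_cases hd : d j = 0
  · have : ¬ Finsupp.single j 1 ≤ d := by simp [Finsupp.single_le_iff, hd]
    simp [this, hd]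
  · have hle : Finsupp.single j 1 ≤ d := by simp [Finsupp.single_le_iff]; omega
    rw [if_pos hle, ← hA (d - _), tsub_add_cancel_of_le hle]
    simp [hd]

theorem indicator_univ_mul_prod_one_sub_X [Fintype σ] :
    (indicator Set.univ : MvPowerSeries σ R) * ∏ i, (1 - X i) = 1 := by
  have key : ∀ s : Finset σ,
      (indicator Set.univ : MvPowerSeries σ R) * ∏ i ∈ s, (1 - X i) =
        indicator {d | ∀ i ∈ s, d i = 0} := by
    intro s
    induction s using Finset.induction_on with
    | empty => simp
    | insert j s hj ih =>
      rw [Finset.prod_insert hj, mul_left_comm, mul_comm, ih, indicator_mul_one_sub_X]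
      · congr 1; ext d; simp [and_comm]
      · intro d
        refine forall₂_congr fun i hi => ?_
        simp [show j ≠ i by rintro rfl; exact hj hi]
  rw [key, ← indicator_singleton_zero]
  congr 1
  ext d
  simp [Finsupp.ext_iff]

variable [Fintype σ]

def HasPolynomialNumerator (F : MvPowerSeries σ R) : Prop :=
  ∃ p : MvPolynomial σ R, F * ∏ i, (1 - X i) = p

namespace HasPolynomialNumerator

variable {F G : MvPowerSeries σ R}

theorem add (hF : HasPolynomialNumerator F) (hG : HasPolynomialNumerator G) :
    HasPolynomialNumerator (F + G) := by
  obtain ⟨p, hp⟩ := hF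
  obtain ⟨q, hq⟩ := hG
  exact ⟨p + q, by rw [add_mul, hp, hq, MvPolynomial.coe_add]⟩

theorem sub (hF : HasPolynomialNumerator F) (hG : HasPolynomialNumerator G) :
    HasPolynomialNumerator (F - G) := by
  obtain ⟨p, hp⟩ := hF
  obtain ⟨q, hq⟩ := hG
  refine ⟨p - q, ?_⟩
  rw [sub_mul, hp, hq]
  exact (map_sub MvPolynomial.coeToMvPowerSeries.ringHom p q).symm

theorem monomial_mul (hF : HasPolynomialNumerator F) (v : σ →₀ ℕ) (a : R) :
    HasPolynomialNumerator (monomial v a * F) := by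
  obtain ⟨p, hp⟩ := hF
  exact ⟨MvPolynomial.monomial v a * p, by
    rw [mul_assoc, hp, MvPolynomial.coe_mul, MvPolynomial.coe_monomial]⟩

end HasPolynomialNumerator

theorem hasPolynomialNumerator_indicator_univ :
    HasPolynomialNumerator (indicator Set.univ : MvPowerSeries σ R) :=
  ⟨1, by rw [indicator_univ_mul_prod_one_sub_X, MvPolynomial.coe_one]⟩

theorem hasPolynomialNumerator_indicator_upperClosure (G : Finset (σ →₀ ℕ)) :
    HasPolynomialNumerator (indicator ↑(upperClosure (G : Set (σ →₀ ℕ))) : MvPowerSeries σ R) := by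
  induction hk : G.card using Nat.strong_induction_on generalizing G with
  | _ k ih =>
  induction G using Finset.induction_on with
  | empty => exact ⟨0, by simp [upperClosure_empty, indicator_empty]⟩
  | insert v G hv _ =>
    rw [Finset.card_insert_of_notMem hv] at hk
    have hG := ih G.card (by omega) G rfl
    have hGv := ih _ (G.card_image_le.trans_lt (by omega)) (G.image (v ⊔ ·)) rfl
    rw [coe_upperClosure_insert, indicator_union, indicator_Ici, Ici_inter_upperClosure]
    exact ((hasPolynomialNumerator_indicator_univ.monomial_mul v 1).add hG).sub hGv

theorem _root_.IsLowerSet.hasPolynomialNumerator_indicator {A : Set (σ →₀ ℕ)} (hA : IsLowerSet A) :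
    HasPolynomialNumerator (indicator A : MvPowerSeries σ R) := by
  obtain ⟨G, hG⟩ := hA.compl.exists_finset_eq_upperClosure
  rw [← compl_compl A, indicator_compl, hG]
  exact hasPolynomialNumerator_indicator_univ.sub (hasPolynomialNumerator_indicator_upperClosure G)

end MvPowerSeries

section Gordan

variable {κ ι : Type*} [Fintype ι] (c : κ → ι → ℤ)

def linearForms : (ι →₀ ℕ) →+ (κ → ℤ) where
  toFun d k := ∑ j, c k j * d j
  map_zero' := by ext; simp
  map_add' d e := by ext; simp [mul_add, Finset.sum_add_distrib]

def solutionSubmonoid : AddSubmonoid (ι →₀ ℕ) :=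
  (AddSubmonoid.nonneg (κ → ℤ)).comap (linearForms c)

theorem mem_solutionSubmonoid {c : κ → ι → ℤ} {d : ι →₀ ℕ} :
    d ∈ solutionSubmonoid c ↔ ∀ k, 0 ≤ ∑ j, c k j * (d j : ℤ) := by
  simp [solutionSubmonoid, linearForms, Pi.le_def]

theorem solutionSubmonoid_fg [Finite κ] : (solutionSubmonoid c).FG := by
  let slack : (κ → ℕ) →+ (κ → ℤ) := (Nat.castAddMonoidHom ℤ).compLeft κ
  have : solutionSubmonoid c =
      (((linearForms c).comp (AddMonoidHom.fst _ _)).eqLocusM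
        (slack.comp (AddMonoidHom.snd _ _))).map (AddMonoidHom.fst _ _) := by
    ext d
    simp only [mem_solutionSubmonoid, AddSubmonoid.mem_map, AddMonoidHom.mem_eqLocusM]
    constructor
    · intro hd
      refine ⟨(d, fun k => (linearForms c d k).toNat), ?_, rfl⟩
      ext k
      simp [slack, linearForms, Int.toNat_of_nonneg (hd k)]
    · rintro ⟨⟨d, s⟩, hds, rfl⟩ k
      have := congr_fun hds k
      simp only [AddMonoidHom.coe_comp, Function.comp_apply, AddMonoidHom.coe_fst,
        AddMonoidHom.coe_snd, linearForms, AddMonoidHom.coe_mk, ZeroHom.coe_mk] at this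
      simp [this, slack]
  rw [this]
  exact (AddSubmonoid.fg_eqLocusM _ _).map _

end Gordan

theorem AddSubmonoid.FG.exists_fin_nonzero_generators {M : Type*} [AddMonoid M]
    {P : AddSubmonoid M} (hP : P.FG) :
    ∃ (t : ℕ) (g : Fin t → M), (∀ i, g i ≠ 0) ∧ AddSubmonoid.closure (Set.range g) = P := by
  obtain ⟨S, rfl⟩ := hP
  let T := S.erase 0
  refine ⟨T.card, fun i => T.equivFin.symm i,
    fun i => (Finset.mem_erase.mp (T.equivFin.symm i).2).1, ?_⟩
  have : Set.range (fun i => (T.equivFin.symm i : M)) = ↑T := by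
    change Set.range (Subtype.val ∘ T.equivFin.symm) = _
    rw [EquivLike.range_comp]
    exact Subtype.range_coe
  rw [this, Finset.coe_erase, AddSubmonoid.closure_sdiff_singleton_zero]

theorem range_linearCombination_nat {ι M : Type*} [AddCommMonoid M] (g : ι → M) :
    Set.range (Finsupp.linearCombination ℕ g) = AddSubmonoid.closure (Set.range g) := by
  rw [← LinearMap.coe_range, Finsupp.range_linearCombination,
    ← Submodule.span_nat_eq_addSubmonoidClosure, Submodule.coe_toAddSubmonoid]

section LexMinimalReps

variable {ι M : Type*} [LinearOrder ι]

def lexMinimalReps (f : (ι →₀ ℕ) → M) : Set (ι →₀ ℕ) :=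
  {a | ∀ b, f b = f a → toLex a ≤ toLex b}

theorem injOn_lexMinimalReps (f : (ι →₀ ℕ) → M) : Set.InjOn f (lexMinimalReps f) :=
  fun a ha b hb hab => toLex.injective (le_antisymm (ha b hab.symm) (hb a hab))

theorem image_lexMinimalReps [Finite ι] (f : (ι →₀ ℕ) → M) :
    f '' lexMinimalReps f = Set.range f := by
  refine (Set.image_subset_range _ _).antisymm ?_
  rintro _ ⟨a, rfl⟩
  obtain ⟨m, hm, hmin⟩ :=
    wellFounded_lt.has_min {b : Lex (ι →₀ ℕ) | f (ofLex b) = f a} ⟨toLex a, rfl⟩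
  exact ⟨ofLex m, fun b hb => not_lt.mp (hmin (toLex b) (hb.trans hm)), hm⟩

theorem isLowerSet_lexMinimalReps {F : Type*} [AddMonoid M] [FunLike F (ι →₀ ℕ) M]
    [AddMonoidHomClass F (ι →₀ ℕ) M] (f : F) :
    IsLowerSet (lexMinimalReps f) := by
  intro a b hba ha b' hb'
  obtain ⟨c, rfl⟩ := exists_add_of_le hba
  have : toLex (b + c) ≤ toLex (b' + c) := ha _ (by rw [map_add, map_add, hb'])
  exact le_of_add_le_add_right this

end LexMinimalReps

namespace MvPowerSeries

variable {ι σ R : Type*} [CommRing R] (g : ι → σ →₀ ℕ)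

theorem hasSubst_monomial [Finite ι] (hg : ∀ i, g i ≠ 0) :
    HasSubst (fun i => (monomial (g i) 1 : MvPowerSeries σ R)) :=
  hasSubst_of_constantCoeff_zero fun i => by
    rw [← coeff_zero_eq_constantCoeff_apply, coeff_monomial, if_neg (hg i).symm]

theorem coeff_subst_monomial [Finite ι] (hg : ∀ i, g i ≠ 0) (f : MvPowerSeries ι R) (e : σ →₀ ℕ) :
    coeff e (subst (fun i => (monomial (g i) 1 : MvPowerSeries σ R)) f) =
      ∑ᶠ d, if Finsupp.linearCombination ℕ g d = e then coeff d f else 0 := by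
  rw [coeff_subst (hasSubst_monomial g hg)]
  refine finsum_congr fun d => ?_
  have : (d.prod fun i k => (monomial (g i) 1 : MvPowerSeries σ R) ^ k) =
      monomial (Finsupp.linearCombination ℕ g d) 1 := by
    simp only [monomial_pow, one_pow, Finsupp.prod, prod_monomial, Finset.prod_const_one,
      Finsupp.linearCombination_apply, Finsupp.sum]
  rw [this, coeff_monomial, smul_eq_mul]
  by_cases h : Finsupp.linearCombination ℕ g d = e
  · simp [h]
  · simp [h, Ne.symm h]

theorem subst_monomial_indicator [Finite ι] (hg : ∀ i, g i ≠ 0) {A : Set (ι →₀ ℕ)}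
    (hA : Set.InjOn (Finsupp.linearCombination ℕ g) A) :
    subst (fun i => (monomial (g i) 1 : MvPowerSeries σ R)) (indicator A : MvPowerSeries ι R) =
      indicator (Finsupp.linearCombination ℕ g '' A) := by
  ext e
  rw [coeff_subst_monomial g hg, coeff_indicator]
  simp only [coeff_indicator]
  by_cases he : e ∈ Finsupp.linearCombination ℕ g '' A
  · obtain ⟨d₀, hd₀, rfl⟩ := he
    rw [finsum_eq_single _ d₀, if_pos rfl, if_pos hd₀, if_pos (Set.mem_image_of_mem _ hd₀)]
    intro d hd
    by_cases hdA : d ∈ A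
    · simp only [hdA, if_true]
      exact if_neg fun h => hd (hA hdA hd₀ h)
    · simp [hdA]
  · rw [if_neg he]
    refine finsum_eq_zero_of_forall_eq_zero fun d => ?_
    by_cases hdA : d ∈ A
    · simp only [hdA, if_true]
      exact if_neg fun h => he ⟨d, hdA, h⟩
    · simp [hdA]

theorem HasPolynomialNumerator.subst_monomial [Fintype ι] (hg : ∀ i, g i ≠ 0)
    {F : MvPowerSeries ι R} (hF : HasPolynomialNumerator F) :
    ∃ p : MvPolynomial σ R,
      subst (fun i => (monomial (g i) 1 : MvPowerSeries σ R)) F *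
        ∏ i, (1 - monomial (g i) 1) = (p : MvPowerSeries σ R) := by
  obtain ⟨q, hq⟩ := hF
  set φ := substAlgHom (R := R) (hasSubst_monomial (R := R) g hg)
  refine ⟨MvPolynomial.aeval (fun i => MvPolynomial.monomial (g i) 1) q, ?_⟩
  have hX : ∀ i, φ (1 - X i) = 1 - monomial (g i) 1 := fun i => by
    rw [map_sub, map_one, substAlgHom_X]
  calc subst (fun i => (monomial (g i) 1 : MvPowerSeries σ R)) F * ∏ i, (1 - monomial (g i) 1)
      = φ (F * ∏ i, (1 - X i)) := by simp only [map_mul, map_prod, hX, φ, substAlgHom_apply]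
    _ = MvPolynomial.aeval (fun i => (monomial (g i) 1 : MvPowerSeries σ R)) q := by
      rw [hq, substAlgHom_coe]
    _ = _ := by
      simpa using (MvPolynomial.comp_aeval_apply (MvPolynomial.coeToMvPowerSeries.algHom R)
        (f := fun i => MvPolynomial.monomial (g i) (1 : R)) q).symm

end MvPowerSeries

theorem solGF_eq_indicator (r n : ℕ) (c : Fin r → Fin n → ℤ) :
    solGF r n c = indicator (solutionSubmonoid c : Set (Fin n →₀ ℕ)) := by
  ext d
  simp only [coeff_indicator, SetLike.mem_coe, mem_solutionSubmonoid]
  rfl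

/-- For any finite homogeneous system of linear inequalities with integer
coefficients, the full generating function of its set of nonnegative integer
solutions is a rational function `p(x₁,…,xₙ)/((1−α₁)⋯(1−α_t))` with `p` an
integer polynomial and each `αᵢ` a (nontrivial) monomial in `x₁,…,xₙ`. -/
theorem generating_function_is_rational (r n : ℕ) (c : Fin r → Fin n → ℤ) :
    ∃ (t : ℕ) (α : Fin t → (Fin n →₀ ℕ)) (p : MvPolynomial (Fin n) ℤ),
      (∀ i, α i ≠ 0) ∧
      solGF r n c * ∏ i, (1 - MvPowerSeries.monomial (R := ℤ) (α i) 1) =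
        (p : MvPowerSeries (Fin n) ℤ) := by
  obtain ⟨t, g, hg0, hg⟩ := (solutionSubmonoid_fg c).exists_fin_nonzero_generators
  let Φ := Finsupp.linearCombination ℕ g
  have hsol : solGF r n c = subst (fun i => (monomial (g i) 1 : MvPowerSeries (Fin n) ℤ))
      (indicator (lexMinimalReps Φ) : MvPowerSeries (Fin t) ℤ) := by
    rw [subst_monomial_indicator g hg0 (injOn_lexMinimalReps Φ), image_lexMinimalReps,
      range_linearCombination_nat, hg, solGF_eq_indicator]
  obtain ⟨p, hp⟩ :=
    ((isLowerSet_lexMinimalReps Φ).hasPolynomialNumerator_indicator (R := ℤ)).subst_monomial g hg0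
  exact ⟨t, g, p, hg0, hsol ▸ hp⟩
end
end
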